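/- arXiv:1806.11466 — 6 statements merged into one kernel-verified Lean document; each statement's English description precedes it below -/
import Mathlib

section
/- Let N, p ≥ 1 satisfy p/√(2π) > log(Np) and log(Np) ≥ 2. Then for every t ∈ ℝ, N·p·(1 − Φ(t)^p)^{N−1}·Φ(t)^{p−1}·φ(t) ≤ 2(√2 + 2)·(log(Np))^{3/2}. Equivalently, the probability density function f_Z of Z = min_{k∈[N]} max_{j∈[p]} W_{kj}, where the W_{kj} are i.i.d. standard normal random variables, satisfies sup_{t∈ℝ} f_Z(t) ≤ 2(√2 + 2)·(log(Np))^{3/2}. -/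
open MeasureTheory ProbabilityTheory

/-- The standard normal cumulative distribution function `Φ`. -/
noncomputable def stdNormalCDF (t : ℝ) : ℝ :=
  ((ProbabilityTheory.gaussianReal 0 1) (Set.Iic t)).toReal

/-- The standard normal density `φ`. -/
noncomputable def stdNormalPDF (t : ℝ) : ℝ :=
  Real.exp (-(t ^ 2) / 2) / Real.sqrt (2 * Real.pi)

/-!
Write `F = Φ(t)`, `u = 1 - F` and `D = N F^p (1 - F^p)^(N-1)`, so that `f_Z(t) = p φ(t) D / F`.
For `t ≤ 0` we have `F ≤ 1/2`, hence `f_Z(t) ≤ N p 2^(1-p) ≤ 1` since `p` is large compared with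
`log (N p)`; for `t² ≥ 2 log (N p)` already `f_Z(t) ≤ N p φ(t) ≤ 1`. In the remaining range
`0 < t < √(2 log (N p))` we have `F ≥ 1/2`, and the Mills-ratio bound `φ(t) ≤ max(4, t + 1) u`
reduces everything to `p u D ≤ log N + 1`, which holds because `D ≤ 1` (a binomial probability)
and `D ≤ N F^p ≤ N e^(-p u)`.
-/

open Real Filter Set Topology

lemma stdNormalPDF_eq_gaussianPDFReal : stdNormalPDF = gaussianPDFReal 0 1 := by
  ext x
  simp [gaussianPDFReal, stdNormalPDF, div_eq_inv_mul]

lemma stdNormalPDF_pos (x : ℝ) : 0 < stdNormalPDF x := by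
  unfold stdNormalPDF; positivity

lemma stdNormalPDF_le_exp_neg {a x : ℝ} (h : 2 * a ≤ x ^ 2) : stdNormalPDF x ≤ exp (-a) := by
  have hpi : 1 ≤ √(2 * π) := one_le_sqrt.2 (by linarith [pi_gt_three])
  calc stdNormalPDF x ≤ exp (-a) / 1 := by
        unfold stdNormalPDF
        gcongr
        linarith
    _ = exp (-a) := div_one _

lemma stdNormalPDF_le_two_mul_stdNormalPDF_one (x : ℝ) : stdNormalPDF x ≤ 2 * stdNormalPDF 1 := by
  unfold stdNormalPDF
  rw [← mul_div_assoc]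
  gcongr
  calc exp (-(x ^ 2) / 2) ≤ 1 := exp_le_one_iff.2 (by nlinarith)
    _ ≤ 2 * exp (-(1 ^ 2) / 2) := by linarith [add_one_le_exp (-(1 ^ 2) / 2 : ℝ)]

lemma integrable_stdNormalPDF : Integrable stdNormalPDF := by
  rw [stdNormalPDF_eq_gaussianPDFReal]
  exact integrable_gaussianPDFReal 0 1

lemma integral_stdNormalPDF : ∫ x, stdNormalPDF x = 1 := by
  rw [stdNormalPDF_eq_gaussianPDFReal]
  exact integral_gaussianPDFReal_eq_one 0 one_ne_zero

lemma hasDerivAt_stdNormalPDF (x : ℝ) : HasDerivAt stdNormalPDF (-x * stdNormalPDF x) x := by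
  have h : HasDerivAt (fun y : ℝ => -(y ^ 2) / 2) (-x) x := by
    refine ((hasDerivAt_pow 2 x).neg.div_const 2).congr_deriv ?_
    push_cast
    ring
  refine (h.exp.div_const √(2 * π)).congr_deriv ?_
  simp only [stdNormalPDF]
  ring

lemma tendsto_stdNormalPDF_atTop : Tendsto stdNormalPDF atTop (𝓝 0) := by
  have h : Tendsto (fun x : ℝ => -(x ^ 2) / 2) atTop atBot :=
    (tendsto_neg_atTop_atBot.comp (tendsto_pow_atTop two_ne_zero)).atBot_div_const two_pos
  have := (tendsto_exp_atBot.comp h).div_const √(2 * π)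
  rwa [zero_div] at this

noncomputable def stdNormalTail (t : ℝ) : ℝ := ∫ x in Ioi t, stdNormalPDF x

lemma stdNormalTail_nonneg (t : ℝ) : 0 ≤ stdNormalTail t :=
  setIntegral_nonneg measurableSet_Ioi fun x _ => (stdNormalPDF_pos x).le

lemma stdNormalCDF_nonneg (t : ℝ) : 0 ≤ stdNormalCDF t := ENNReal.toReal_nonneg

lemma monotone_stdNormalCDF : Monotone stdNormalCDF := fun _ _ h =>
  ENNReal.toReal_mono (measure_ne_top _ _) (measure_mono (Iic_subset_Iic.2 h))

lemma stdNormalCDF_eq_integral (t : ℝ) : stdNormalCDF t = ∫ x in Iic t, stdNormalPDF x := by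
  rw [stdNormalCDF, gaussianReal_apply_eq_integral 0 one_ne_zero, ENNReal.toReal_ofReal,
    stdNormalPDF_eq_gaussianPDFReal]
  exact setIntegral_nonneg measurableSet_Iic fun x _ => gaussianPDFReal_nonneg 0 1 x

lemma stdNormalCDF_add_stdNormalTail (t : ℝ) : stdNormalCDF t + stdNormalTail t = 1 := by
  rw [stdNormalCDF_eq_integral, stdNormalTail, intervalIntegral.integral_Iic_add_Ioi
    integrable_stdNormalPDF.integrableOn integrable_stdNormalPDF.integrableOn,
    integral_stdNormalPDF]

lemma stdNormalCDF_zero : stdNormalCDF 0 = 1 / 2 := by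
  have hsymm : stdNormalCDF 0 = stdNormalTail 0 := by
    rw [stdNormalCDF_eq_integral, stdNormalTail, ← neg_zero, ← integral_comp_neg_Iic]
    simp [stdNormalPDF]
  linarith [stdNormalCDF_add_stdNormalTail 0]

lemma stdNormalCDF_le_one (t : ℝ) : stdNormalCDF t ≤ 1 := by
  linarith [stdNormalCDF_add_stdNormalTail t, stdNormalTail_nonneg t]

lemma antitone_stdNormalTail : Antitone stdNormalTail := fun a b h => by
  linarith [stdNormalCDF_add_stdNormalTail a, stdNormalCDF_add_stdNormalTail b,
    monotone_stdNormalCDF h]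

/-- Mills' ratio bound, from `∫_t^∞ (1 + x⁻²) φ(x) dx = φ(t) / t`. -/
lemma stdNormalPDF_le_mul_stdNormalTail {t : ℝ} (ht : 0 < t) :
    stdNormalPDF t ≤ (t + t⁻¹) * stdNormalTail t := by
  have hderiv : ∀ x ∈ Ici t, HasDerivAt (fun y => -stdNormalPDF y / y)
      ((1 + (x ^ 2)⁻¹) * stdNormalPDF x) x := by
    intro x hx
    have hx0 : x ≠ 0 := (ht.trans_le hx).ne'
    refine ((hasDerivAt_stdNormalPDF x).neg.div (hasDerivAt_id x) hx0).congr_deriv ?_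
    simp only [Pi.neg_apply, id]
    field_simp
    ring
  have hnonneg : ∀ x ∈ Ioi t, 0 ≤ (1 + (x ^ 2)⁻¹) * stdNormalPDF x :=
    fun x _ => mul_nonneg (by positivity) (stdNormalPDF_pos x).le
  have hlim : Tendsto (fun y => -stdNormalPDF y / y) atTop (𝓝 0) := by
    simpa using tendsto_stdNormalPDF_atTop.neg.div_atTop tendsto_id
  have hle : ∫ x in Ioi t, (1 + (x ^ 2)⁻¹) * stdNormalPDF x ≤
      (1 + (t ^ 2)⁻¹) * stdNormalTail t := by
    rw [stdNormalTail, ← integral_const_mul]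
    refine setIntegral_mono_on (integrableOn_Ioi_deriv_of_nonneg' hderiv hnonneg hlim)
      (integrable_stdNormalPDF.integrableOn.const_mul _) measurableSet_Ioi fun x hx => ?_
    have := (stdNormalPDF_pos x).le
    gcongr
    exact hx.le
  rw [integral_Ioi_of_hasDerivAt_of_nonneg' hderiv hnonneg hlim] at hle
  calc stdNormalPDF t = t * (0 - -stdNormalPDF t / t) := by field_simp; ring
    _ ≤ t * ((1 + (t ^ 2)⁻¹) * stdNormalTail t) := by gcongr
    _ = (t + t⁻¹) * stdNormalTail t := by field_simp

lemma stdNormalPDF_le_four_mul_stdNormalTail {t : ℝ} (ht : t ≤ 1) :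
    stdNormalPDF t ≤ 4 * stdNormalTail t := by
  have hone := stdNormalPDF_le_mul_stdNormalTail one_pos
  norm_num at hone
  linarith [stdNormalPDF_le_two_mul_stdNormalPDF_one t, antitone_stdNormalTail ht]

lemma stdNormalPDF_le_max_mul_stdNormalTail {t : ℝ} (ht : 0 < t) :
    stdNormalPDF t ≤ max 4 (t + 1) * stdNormalTail t := by
  have hu := stdNormalTail_nonneg t
  rcases le_or_gt t 1 with ht1 | ht1
  · calc stdNormalPDF t ≤ 4 * stdNormalTail t := stdNormalPDF_le_four_mul_stdNormalTail ht1
      _ ≤ max 4 (t + 1) * stdNormalTail t := by gcongr; exact le_max_left _ _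
  · calc stdNormalPDF t ≤ (t + t⁻¹) * stdNormalTail t := stdNormalPDF_le_mul_stdNormalTail ht
      _ ≤ max 4 (t + 1) * stdNormalTail t := by
          gcongr
          exact le_max_of_le_right (by gcongr; exact inv_le_one_of_one_le₀ ht1.le)

/-- The `k = 1` term of the binomial expansion of `(y + (1 - y)) ^ N`. -/
lemma natCast_mul_mul_one_sub_pow_le_one (N : ℕ) {y : ℝ} (h0 : 0 ≤ y) (h1 : y ≤ 1) :
    N * y * (1 - y) ^ (N - 1) ≤ 1 := by
  rcases N.eq_zero_or_pos with rfl | hN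
  · simp
  have hterm := Finset.single_le_sum (s := Finset.range (N + 1))
    (f := fun k => y ^ k * (1 - y) ^ (N - k) * N.choose k)
    (fun k _ => mul_nonneg (mul_nonneg (pow_nonneg h0 _) (pow_nonneg (sub_nonneg.2 h1) _))
      (Nat.cast_nonneg _)) (Finset.mem_range.2 (by omega : 1 < N + 1))
  rw [← add_pow, add_sub_cancel, one_pow] at hterm
  simpa [mul_comm, mul_left_comm, mul_assoc] using hterm

lemma mul_exp_sub_le {c x : ℝ} (hc : 0 ≤ c) (hx : c ≤ x) : x * exp (c - x) ≤ c + 1 := by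
  rw [show c - x = -(x - c) by ring, exp_neg, ← div_eq_mul_inv, div_le_iff₀ (exp_pos _)]
  nlinarith [add_one_le_exp (x - c)]

lemma mul_mul_pow_mul_one_sub_pow_le_log_add_one {N : ℕ} (hN : 1 ≤ N) (p : ℕ) {u : ℝ}
    (h0 : 0 ≤ u) (h1 : u ≤ 1) :
    p * u * (N * (1 - u) ^ p * (1 - (1 - u) ^ p) ^ (N - 1)) ≤ log N + 1 := by
  set y := (1 - u) ^ p
  have hy0 : 0 ≤ y := pow_nonneg (by linarith) _
  have hy1 : y ≤ 1 := pow_le_one₀ (by linarith) (by linarith)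
  have hpu : 0 ≤ p * u := by positivity
  have hlogN : 0 ≤ log N := log_nonneg (by exact_mod_cast hN)
  rcases le_total (p * u) (log N) with h | h
  · calc p * u * (N * y * (1 - y) ^ (N - 1)) ≤ p * u * 1 := by
          gcongr
          exact natCast_mul_mul_one_sub_pow_le_one N hy0 hy1
      _ ≤ log N + 1 := by linarith
  · have hD : N * y * (1 - y) ^ (N - 1) ≤ exp (log N - p * u) := by
      calc N * y * (1 - y) ^ (N - 1) ≤ N * y :=
            mul_le_of_le_one_right (by positivity) (pow_le_one₀ (by linarith) (by linarith))
        _ ≤ N * exp (-u) ^ p := by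
            gcongr
            exact pow_le_pow_left₀ (by linarith) (by linarith [add_one_le_exp (-u)]) p
        _ = exp (log N - p * u) := by
            rw [← exp_nat_mul, ← exp_log (by positivity : (0 : ℝ) < N), ← exp_add, log_exp]
            ring_nf
    calc p * u * (N * y * (1 - y) ^ (N - 1)) ≤ p * u * exp (log N - p * u) := by gcongr
      _ ≤ log N + 1 := mul_exp_sub_le hlogN h

lemma natCast_mul_le_two_pow_pred {N p : ℕ} (hN : 1 ≤ N) (hp : 3 ≤ p)
    (h : log (N * p) ≤ 2 / 5 * p) : (N * p : ℝ) ≤ 2 ^ (p - 1) := by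
  have hNp : (0 : ℝ) < N * p := by positivity
  have hcast : ((p - 1 : ℕ) : ℝ) = p - 1 := by rw [Nat.cast_sub (by omega), Nat.cast_one]
  have hp' : (3 : ℝ) ≤ p := by exact_mod_cast hp
  rw [← exp_log hNp, ← exp_log (two_pos : (0 : ℝ) < 2), ← exp_nat_mul, hcast]
  gcongr
  nlinarith [log_two_gt_d9]

lemma log_add_one_le_log_mul {N p : ℕ} (hN : 1 ≤ N) (hp : 3 ≤ p) :
    log N + 1 ≤ log (N * p) := by
  have hp' : (3 : ℝ) ≤ p := by exact_mod_cast hp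
  have : 1 ≤ log p := by
    rw [le_log_iff_exp_le (by linarith)]
    linarith [exp_one_lt_d9]
  rw [log_mul (by positivity) (by positivity)]
  linarith

lemma two_mul_max_mul_le_rpow {L : ℝ} (hL : 2 ≤ L) :
    2 * max 4 (√2 * √L + 1) * L ≤ 2 * (√2 + 2) * L ^ ((3 : ℝ) / 2) := by
  rw [show (3 : ℝ) / 2 = 1 + 1 / 2 by norm_num, rpow_add (by linarith), rpow_one, ← sqrt_eq_rpow]
  have h2L : √2 ≤ √L := sqrt_le_sqrt hL
  have h1 : 1 ≤ √2 := one_le_sqrt.2 one_le_two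
  have hmax : max 4 (√2 * √L + 1) ≤ (√2 + 2) * √L :=
    max_le (by nlinarith [mul_self_sqrt zero_le_two]) (by nlinarith)
  nlinarith

section Density

noncomputable def minMaxDensity (N p : ℕ) (t : ℝ) : ℝ :=
  N * p * (1 - stdNormalCDF t ^ p) ^ (N - 1) * stdNormalCDF t ^ (p - 1) * stdNormalPDF t

variable {N p : ℕ} {t : ℝ}

lemma one_sub_stdNormalCDF_pow_mem_Icc (p : ℕ) (t : ℝ) : 1 - stdNormalCDF t ^ p ∈ Icc 0 1 :=
  ⟨sub_nonneg.2 (pow_le_one₀ (stdNormalCDF_nonneg t) (stdNormalCDF_le_one t)),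
    by linarith [pow_nonneg (stdNormalCDF_nonneg t) p]⟩

lemma minMaxDensity_le_of_pow_le {B : ℝ} (hB : stdNormalCDF t ^ (p - 1) ≤ B) :
    minMaxDensity N p t ≤ N * p * B * stdNormalPDF t := by
  obtain ⟨h0, h1⟩ := one_sub_stdNormalCDF_pow_mem_Icc p t
  have := (stdNormalPDF_pos t).le
  calc minMaxDensity N p t ≤ N * p * 1 * B * stdNormalPDF t := by
        unfold minMaxDensity
        gcongr
        · exact pow_nonneg (stdNormalCDF_nonneg t) _
        · exact pow_le_one₀ h0 h1
    _ = N * p * B * stdNormalPDF t := by ring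

lemma minMaxDensity_le_of_nonneg (hN : 1 ≤ N) (ht : 0 ≤ t) {K : ℝ}
    (hK : stdNormalPDF t ≤ K * stdNormalTail t) : minMaxDensity N p t ≤ 2 * K * (log N + 1) := by
  set F := stdNormalCDF t
  set u := stdNormalTail t
  have hF : F = 1 - u := by linarith [stdNormalCDF_add_stdNormalTail t]
  have hu0 : 0 ≤ u := stdNormalTail_nonneg t
  have hu1 : u ≤ 1 := by linarith [stdNormalCDF_nonneg t]
  have hK0 : 0 ≤ K := by nlinarith [stdNormalPDF_pos t]
  have hF2 : 1 / 2 ≤ F := stdNormalCDF_zero ▸ monotone_stdNormalCDF ht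
  have hpow : F ^ (p - 1) ≤ 2 * F ^ p := by
    rcases p with _ | p
    · norm_num
    · rw [Nat.add_sub_cancel, pow_succ]
      nlinarith [pow_nonneg (stdNormalCDF_nonneg t) p]
  obtain ⟨h0, -⟩ := one_sub_stdNormalCDF_pow_mem_Icc p t
  calc minMaxDensity N p t
      ≤ N * p * (1 - F ^ p) ^ (N - 1) * (2 * F ^ p) * (K * u) := by
        unfold minMaxDensity
        have := (stdNormalPDF_pos t).le
        gcongr
    _ = 2 * K * (p * u * (N * (1 - u) ^ p * (1 - (1 - u) ^ p) ^ (N - 1))) := by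
        rw [hF]; ring
    _ ≤ 2 * K * (log N + 1) := by
        gcongr
        exact mul_mul_pow_mul_one_sub_pow_le_log_add_one hN p hu0 hu1

lemma minMaxDensity_le_one_of_nonpos (hN : 1 ≤ N) (hp : 3 ≤ p) (h : log (N * p) ≤ 2 / 5 * p)
    (ht : t ≤ 0) : minMaxDensity N p t ≤ 1 := by
  have hF : stdNormalCDF t ^ (p - 1) ≤ (1 / 2) ^ (p - 1) :=
    pow_le_pow_left₀ (stdNormalCDF_nonneg t) (stdNormalCDF_zero ▸ monotone_stdNormalCDF ht) _
  have := (stdNormalPDF_pos t).le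
  calc minMaxDensity N p t ≤ N * p * (1 / 2) ^ (p - 1) * stdNormalPDF t :=
        minMaxDensity_le_of_pow_le hF
    _ ≤ 1 * 1 := by
        gcongr
        · rw [one_div, inv_pow]
          exact mul_inv_le_one_of_le₀ (natCast_mul_le_two_pow_pred hN hp h) (by positivity)
        · simpa using stdNormalPDF_le_exp_neg (a := 0) (x := t) (by simp [sq_nonneg])
    _ = 1 := one_mul 1

lemma minMaxDensity_le_one_of_two_mul_log_le_sq (hN : 1 ≤ N) (hp : 1 ≤ p)
    (ht : 2 * log (N * p) ≤ t ^ 2) : minMaxDensity N p t ≤ 1 := by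
  calc minMaxDensity N p t ≤ N * p * 1 * stdNormalPDF t :=
        minMaxDensity_le_of_pow_le (pow_le_one₀ (stdNormalCDF_nonneg t) (stdNormalCDF_le_one t))
    _ ≤ N * p * exp (-log (N * p)) := by
        rw [mul_one]
        gcongr
        exact stdNormalPDF_le_exp_neg ht
    _ = 1 := by
        have : (0 : ℝ) < N * p := by positivity
        rw [exp_neg, exp_log this, mul_inv_cancel₀ this.ne']

end Density

theorem minMax_density_upper_bound_general (N p : ℕ) (hN : 1 ≤ N)
    (h1 : Real.log ((N : ℝ) * p) < (p : ℝ) / Real.sqrt (2 * Real.pi))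
    (h2 : 2 ≤ Real.log ((N : ℝ) * p)) (t : ℝ) :
    (N : ℝ) * p * (1 - stdNormalCDF t ^ p) ^ (N - 1) * stdNormalCDF t ^ (p - 1) *
        stdNormalPDF t ≤
      2 * (Real.sqrt 2 + 2) * Real.log ((N : ℝ) * p) ^ ((3 : ℝ) / 2) := by
  set L := log (N * p)
  have hLp : L ≤ 2 / 5 * p := by
    have hsqrt : 5 / 2 ≤ √(2 * π) := le_sqrt_of_sq_le (by nlinarith [pi_gt_d2])
    have := (lt_div_iff₀ (by positivity)).1 h1
    nlinarith
  have hp : 3 ≤ p := by exact_mod_cast (show (3 : ℝ) ≤ p by linarith)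
  have hB := two_mul_max_mul_le_rpow h2
  have hB1 : 1 ≤ 2 * max 4 (√2 * √L + 1) * L := by nlinarith [le_max_left 4 (√2 * √L + 1)]
  change minMaxDensity N p t ≤ _
  rcases le_or_gt t 0 with ht | ht
  · linarith [minMaxDensity_le_one_of_nonpos hN hp hLp ht]
  rcases le_or_gt (2 * L) (t ^ 2) with htL | htL
  · linarith [minMaxDensity_le_one_of_two_mul_log_le_sq hN (by omega) htL]
  calc minMaxDensity N p t ≤ 2 * max 4 (t + 1) * (log N + 1) :=
        minMaxDensity_le_of_nonneg hN ht.le (stdNormalPDF_le_max_mul_stdNormalTail ht)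
    _ ≤ 2 * max 4 (√2 * √L + 1) * L := by
        gcongr
        · rw [← sqrt_mul zero_le_two]
          exact le_sqrt_of_sq_le htL.le
        · exact log_add_one_le_log_mul hN hp
    _ ≤ _ := hB

/-- Upper bound on the density of `Z = min_{k∈[N]} max_{j∈[p]} W_{kj}` for i.i.d. standard
normal `W_{kj}`: the density `f_Z(t) = N p (1 - Φ(t)^p)^{N-1} Φ(t)^{p-1} φ(t)` is bounded by
`2(√2 + 2) (log (Np))^{3/2}`. -/
theorem minMax_density_upper_bound (N p : ℕ) (hN : 1 ≤ N) (hp : 1 ≤ p)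
    (h1 : Real.log ((N : ℝ) * p) < (p : ℝ) / Real.sqrt (2 * Real.pi))
    (h2 : 2 ≤ Real.log ((N : ℝ) * p)) (t : ℝ) :
    (N : ℝ) * p * (1 - stdNormalCDF t ^ p) ^ (N - 1) * stdNormalCDF t ^ (p - 1) *
        stdNormalPDF t ≤
      2 * (Real.sqrt 2 + 2) * Real.log ((N : ℝ) * p) ^ ((3 : ℝ) / 2) :=
  minMax_density_upper_bound_general N p hN h1 h2 t
end

section
/- Let β > 0, N, p ≥ 1, μ̄ ∈ ℝ^{N×p}, and let g : ℝ → ℝ be three times continuously differentiable with bounded first, second and third derivatives. Define m : ℝ^{N×p} → ℝ by m(X) := g(G_β(X + μ̄)). Then for every X ∈ ℝ^{N×p}: (i) Σ_{(k,j)∈[N]×[p]} |∂m/∂X_{kj}(X)| ≤ ‖g'‖_∞; (ii) Σ over all pairs ((k₁,j₁),(k₂,j₂)) ∈ ([N]×[p])² of |∂²m/∂X_{k₁j₁}∂X_{k₂j₂}(X)| ≤ ‖g''‖_∞ + 4β‖g'‖_∞; (iii) Σ over all triples ((k₁,j₁),(k₂,j₂),(k₃,j₃)) ∈ ([N]×[p])³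 of |∂³m/∂X_{k₁j₁}∂X_{k₂j₂}∂X_{k₃j₃}(X)| ≤ ‖g'''‖_∞ + 16β‖g''‖_∞ + 24β²‖g'‖_∞. -/
/-- The soft-max functional `F_β(v) = β⁻¹ log (Σ_j exp (β v_j))`. -/
noncomputable def softMax (β : ℝ) {m : ℕ} (v : Fin m → ℝ) : ℝ :=
  β⁻¹ * Real.log (∑ j, Real.exp (β * v j))

/-- The smooth MinMax approximation `G_β(W) = -F_β(-F_β(W))`, where the inner `F_β` is
applied to every row of `W`. -/
noncomputable def smoothMinMax (β : ℝ) {N p : ℕ} (W : Fin N → Fin p → ℝ) : ℝ :=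
  - softMax β fun k => - softMax β (W k)

/-- The composition `m(X) = g(G_β(X + μ̄))` viewed as a function of the vectorized matrix
`X : (Fin N × Fin p) → ℝ`. -/
noncomputable def mComp (β : ℝ) {N p : ℕ} (μb : Fin N × Fin p → ℝ) (g : ℝ → ℝ)
    (X : Fin N × Fin p → ℝ) : ℝ :=
  g (smoothMinMax β fun k j => X (k, j) + μb (k, j))

open Real Finset

set_option linter.unusedSectionVars false
set_option linter.unusedVariables false
set_option maxHeartbeats 1000000

namespace SMXaux

variable {N p : ℕ} [NeZero N] [NeZero p]

abbrev E (N p : ℕ) := (Fin N × Fin p) → ℝ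

noncomputable def toCLM (v : E N p) : E N p →L[ℝ] ℝ :=
  ∑ c, v c • ContinuousLinearMap.proj c

lemma toCLM_apply (v y : E N p) : toCLM v y = ∑ c, v c * y c := by
  simp [toCLM, ContinuousLinearMap.sum_apply]

lemma single_eq_ite (c : Fin N × Fin p) :
    (Pi.single c (1:ℝ) : E N p) = fun j => if c = j then 1 else 0 := by
  funext j
  rw [Pi.single_apply]
  exact if_congr eq_comm rfl rfl

lemma toCLM_single (v : E N p) (b : Fin N × Fin p) :
    toCLM v (Pi.single b 1) = v b := by
  rw [toCLM_apply]
  rw [Finset.sum_eq_single b]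
  · simp
  · intro c _ hc
    simp [Pi.single_apply, Ne.symm hc]
  · simp

lemma clm_eq_toCLM {L : E N p →L[ℝ] ℝ} {v : E N p}
    (h : ∀ c, L (Pi.single c 1) = v c) : L = toCLM v := by
  ext y
  have hy : y = ∑ c, y c • (Pi.single c (1:ℝ) : E N p) := by
    conv_lhs => rw [pi_eq_sum_univ y]
    refine Finset.sum_congr rfl fun c _ => ?_
    rw [single_eq_ite]
  conv_lhs => rw [hy]
  rw [map_sum, toCLM_apply]
  refine Finset.sum_congr rfl fun c _ => ?_
  rw [map_smul, h c, smul_eq_mul, mul_comm]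

lemma hasFDerivAt_toCLM {h : E N p → ℝ} {L : E N p →L[ℝ] ℝ} {v : E N p} {X : E N p}
    (H : HasFDerivAt h L X) (hv : ∀ c, L (Pi.single c 1) = v c) :
    HasFDerivAt h (toCLM v) X := (clm_eq_toCLM hv) ▸ H

noncomputable section

variable (β : ℝ) (μb : E N p)

def ez (X : E N p) (k : Fin N) : ℝ := ∑ j, Real.exp (β * (X (k, j) + μb (k, j)))

def rr (X : E N p) (a : Fin N × Fin p) : ℝ :=
  Real.exp (β * (X a + μb a)) / ez β μb X a.1

def zq (X : E N p) : ℝ := ∑ k, (ez β μb X k)⁻¹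

def qq (X : E N p) (k : Fin N) : ℝ := (ez β μb X k)⁻¹ / zq β μb X

def PP (X : E N p) (a : Fin N × Fin p) : ℝ := qq β μb X a.1 * rr β μb X a

def ff (X : E N p) : ℝ := -(β⁻¹ * Real.log (zq β μb X))

def eD (a c : Fin N × Fin p) : ℝ := if a = c then 1 else 0

def dD (a c : Fin N × Fin p) : ℝ := if a.1 = c.1 then 1 else 0

def drr (X : E N p) (b c : Fin N × Fin p) : ℝ :=
  β * rr β μb X b * (eD b c - dD b c * rr β μb X c)

def AA (X : E N p) (a b : Fin N × Fin p) : ℝ :=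
  eD a b - 2 * dD a b * rr β μb X b + PP β μb X b

def QQ (X : E N p) (a c : Fin N × Fin p) : ℝ := β * PP β μb X a * AA β μb X a c

def TT (X : E N p) (a b c : Fin N × Fin p) : ℝ :=
  β * (QQ β μb X a c * AA β μb X a b
    + PP β μb X a * (-(2 * dD a b * drr β μb X b c) + QQ β μb X b c))

variable {β μb}

lemma ez_pos (hβ : 0 < β) (X : E N p) (k : Fin N) : 0 < ez β μb X k := by
  have : Nonempty (Fin p) := ⟨⟨0, Nat.pos_of_ne_zero (NeZero.ne p)⟩⟩
  exact Finset.sum_pos (fun j _ => Real.exp_pos _) Finset.univ_nonempty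

lemma zq_pos (hβ : 0 < β) (X : E N p) : 0 < zq β μb X := by
  have : Nonempty (Fin N) := ⟨⟨0, Nat.pos_of_ne_zero (NeZero.ne N)⟩⟩
  exact Finset.sum_pos (fun k _ => inv_pos.2 (ez_pos hβ X k)) Finset.univ_nonempty

lemma rr_nonneg (hβ : 0 < β) (X : E N p) (a : Fin N × Fin p) : 0 ≤ rr β μb X a :=
  div_nonneg (Real.exp_pos _).le (ez_pos hβ X a.1).le

lemma qq_nonneg (hβ : 0 < β) (X : E N p) (k : Fin N) : 0 ≤ qq β μb X k :=
  div_nonneg (inv_pos.2 (ez_pos hβ X k)).le (zq_pos hβ X).le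

lemma PP_nonneg (hβ : 0 < β) (X : E N p) (a : Fin N × Fin p) : 0 ≤ PP β μb X a :=
  mul_nonneg (qq_nonneg hβ X a.1) (rr_nonneg hβ X a)

lemma rr_row_sum (hβ : 0 < β) (X : E N p) (k : Fin N) :
    ∑ j, rr β μb X (k, j) = 1 := by
  simp only [rr]
  rw [← Finset.sum_div]
  exact div_self (ez_pos hβ X k).ne'

lemma qq_sum (hβ : 0 < β) (X : E N p) : ∑ k, qq β μb X k = 1 := by
  simp only [qq]
  rw [← Finset.sum_div]
  exact div_self (zq_pos hβ X).ne'

lemma PP_sum (hβ : 0 < β) (X : E N p) : ∑ a, PP β μb X a = 1 := by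
  rw [Fintype.sum_prod_type]
  have : ∀ k, ∑ j, PP β μb X (k, j) = qq β μb X k := by
    intro k
    simp only [PP]
    rw [← Finset.mul_sum, rr_row_sum hβ X k, mul_one]
  simp only [this, qq_sum hβ X]

lemma hasFDerivAt_ez (X : E N p) (k : Fin N) :
    HasFDerivAt (fun X => ez β μb X k)
      (toCLM (fun c => if k = c.1 then β * Real.exp (β * (X c + μb c)) else 0)) X := by
  have H : ∀ j : Fin p, HasFDerivAt (fun X : E N p => Real.exp (β * (X (k, j) + μb (k, j))))
      (Real.exp (β * (X (k, j) + μb (k, j))) • (β • ContinuousLinearMap.proj (k, j))) X :=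
    fun j => (((hasFDerivAt_apply (k, j) X).add_const _).const_mul β).exp
  refine hasFDerivAt_toCLM (HasFDerivAt.fun_sum (u := Finset.univ) fun j _ => H j) ?_
  rintro ⟨c1, c2⟩
  by_cases h : k = c1
  · subst h
    rw [if_pos rfl]
    simp only [ContinuousLinearMap.sum_apply, ContinuousLinearMap.smul_apply,
      ContinuousLinearMap.proj_apply, Pi.single_apply, Prod.mk.injEq, smul_eq_mul]
    rw [Finset.sum_eq_single c2]
    · simp [mul_comm]
    · intro j _ hj
      simp only [mul_ite, mul_one, mul_zero, ite_eq_right_iff]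
      exact fun h' => absurd h'.2 hj
    · simp
  · rw [if_neg h]
    simp only [ContinuousLinearMap.sum_apply, ContinuousLinearMap.smul_apply,
      ContinuousLinearMap.proj_apply, Pi.single_apply, Prod.mk.injEq, smul_eq_mul]
    rw [Finset.sum_eq_zero]
    intro j _
    simp only [mul_ite, mul_one, mul_zero, ite_eq_right_iff]
    exact fun h' => absurd h'.1 h

end

end SMXaux
namespace SMXaux
variable {N p : ℕ} [NeZero N] [NeZero p] {β : ℝ} {μb : E N p}

lemma hasFDerivAt_rr (hβ : 0 < β) (X : E N p) (b : Fin N × Fin p) :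
    HasFDerivAt (fun X => rr β μb X b) (toCLM (fun c => drr β μb X b c)) X := by
  have hnum : HasFDerivAt (fun X : E N p => Real.exp (β * (X b + μb b)))
      (Real.exp (β * (X b + μb b)) • (β • ContinuousLinearMap.proj b)) X :=
    (((hasFDerivAt_apply b X).add_const _).const_mul β).exp
  have hden := hasFDerivAt_ez (β := β) (μb := μb) X b.1
  have hne : ez β μb X b.1 ≠ 0 := (ez_pos hβ X b.1).ne'
  have hinv : HasFDerivAt (fun X : E N p => (ez β μb X b.1)⁻¹)
      ((-(ez β μb X b.1 ^ 2)⁻¹) •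
        toCLM (fun c => if b.1 = c.1 then β * Real.exp (β * (X c + μb c)) else 0)) X :=
    (hasDerivAt_inv hne).comp_hasFDerivAt X hden
  have heq : (fun X : E N p => rr β μb X b)
      = fun X => Real.exp (β * (X b + μb b)) * (ez β μb X b.1)⁻¹ := by
    funext Y; rw [rr, div_eq_mul_inv]
  rw [heq]
  refine hasFDerivAt_toCLM (hnum.mul hinv) ?_
  intro c
  simp only [ContinuousLinearMap.add_apply, ContinuousLinearMap.smul_apply, toCLM_single,
    ContinuousLinearMap.proj_apply, smul_eq_mul, Pi.single_apply]
  by_cases h1 : b.1 = c.1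
  · by_cases h2 : b = c
    · subst h2
      simp only [if_pos rfl, drr, eD, dD, rr, if_true]
      field_simp
      ring
    · simp only [if_pos h1, if_neg h2, drr, eD, dD, rr, if_neg fun hh : c = b => h2 hh.symm]
      rw [← h1]
      field_simp
      ring
  · have h2 : b ≠ c := fun hh => h1 (by rw [hh])
    simp only [if_neg h1, if_neg h2, drr, eD, dD, rr, if_neg fun hh : c = b => h2 hh.symm]
    ring

end SMXaux
namespace SMXaux
variable {N p : ℕ} [NeZero N] [NeZero p] {β : ℝ} {μb : E N p}

lemma hasFDerivAt_zq (hβ : 0 < β) (X : E N p) :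
    HasFDerivAt (fun X => zq β μb X)
      (toCLM fun c => -(β * (ez β μb X c.1)⁻¹ * rr β μb X c)) X := by
  have hk : ∀ k : Fin N, HasFDerivAt (fun X : E N p => (ez β μb X k)⁻¹)
      ((-(ez β μb X k ^ 2)⁻¹) •
        toCLM (fun c => if k = c.1 then β * Real.exp (β * (X c + μb c)) else 0)) X :=
    fun k => (hasDerivAt_inv (ez_pos hβ X k).ne').comp_hasFDerivAt X (hasFDerivAt_ez X k)
  have hsum := HasFDerivAt.fun_sum (u := Finset.univ) fun k (_ : k ∈ Finset.univ) => hk k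
  simp only [zq]
  refine hasFDerivAt_toCLM hsum ?_
  intro c
  simp only [ContinuousLinearMap.sum_apply, ContinuousLinearMap.smul_apply, toCLM_single,
    smul_eq_mul]
  rw [Finset.sum_eq_single c.1]
  · rw [if_pos rfl, rr]
    have h1 : ez β μb X c.1 ≠ 0 := (ez_pos hβ X c.1).ne'
    field_simp
  · intro k _ hk'
    rw [if_neg hk', mul_zero]
  · simp

lemma hasFDerivAt_qq (hβ : 0 < β) (X : E N p) (k : Fin N) :
    HasFDerivAt (fun X => qq β μb X k)
      (toCLM fun c =>
        -(β * qq β μb X k * ((if k = c.1 then 1 else 0) - qq β μb X c.1) * rr β μb X c)) X := by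
  have hvz : HasFDerivAt (fun X : E N p => (ez β μb X k)⁻¹)
      ((-(ez β μb X k ^ 2)⁻¹) •
        toCLM (fun c => if k = c.1 then β * Real.exp (β * (X c + μb c)) else 0)) X :=
    (hasDerivAt_inv (ez_pos hβ X k).ne').comp_hasFDerivAt X (hasFDerivAt_ez X k)
  have hzinv : HasFDerivAt (fun X : E N p => (zq β μb X)⁻¹)
      ((-(zq β μb X ^ 2)⁻¹) • toCLM fun c => -(β * (ez β μb X c.1)⁻¹ * rr β μb X c)) X :=
    (hasDerivAt_inv (zq_pos hβ X).ne').comp_hasFDerivAt X (hasFDerivAt_zq hβ X)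
  have heq : (fun X : E N p => qq β μb X k)
      = fun X => (ez β μb X k)⁻¹ * (zq β μb X)⁻¹ := by
    funext Y; rw [qq, div_eq_mul_inv]
  rw [heq]
  refine hasFDerivAt_toCLM (hvz.mul hzinv) ?_
  intro c
  have h1 : ez β μb X k ≠ 0 := (ez_pos hβ X k).ne'
  have h2 : ez β μb X c.1 ≠ 0 := (ez_pos hβ X c.1).ne'
  have h3 : zq β μb X ≠ 0 := (zq_pos hβ X).ne'
  simp only [ContinuousLinearMap.add_apply, ContinuousLinearMap.smul_apply, toCLM_single,
    smul_eq_mul, qq, rr]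
  by_cases h : k = c.1
  · rw [if_pos h, if_pos h, ← h]
    field_simp
    ring
  · rw [if_neg h, if_neg h, mul_zero]
    field_simp
    ring
end SMXaux
namespace SMXaux
variable {N p : ℕ} [NeZero N] [NeZero p] {β : ℝ} {μb : E N p}

lemma hasFDerivAt_PP (hβ : 0 < β) (X : E N p) (a : Fin N × Fin p) :
    HasFDerivAt (fun X => PP β μb X a) (toCLM fun c => QQ β μb X a c) X := by
  simp only [PP]
  refine hasFDerivAt_toCLM ((hasFDerivAt_qq hβ X a.1).mul (hasFDerivAt_rr hβ X a)) ?_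
  intro c
  simp only [ContinuousLinearMap.add_apply, ContinuousLinearMap.smul_apply, toCLM_single,
    smul_eq_mul, QQ, AA, PP, eD, dD, drr]
  by_cases h1 : a.1 = c.1
  · by_cases h2 : a = c
    · subst h2
      simp only [if_pos rfl]
      ring
    · simp only [if_pos h1, if_neg h2]
      ring
  · have h2 : a ≠ c := fun hh => h1 (by rw [hh])
    simp only [if_neg h1, if_neg h2]
    ring

lemma hasFDerivAt_ff (hβ : 0 < β) (X : E N p) :
    HasFDerivAt (fun X => ff β μb X) (toCLM fun c => PP β μb X c) X := by
  simp only [ff]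
  have H := (((hasFDerivAt_zq (μb := μb) hβ X).log (zq_pos hβ X).ne').const_mul β⁻¹).neg
  refine hasFDerivAt_toCLM H ?_
  intro c
  have h2 : ez β μb X c.1 ≠ 0 := (ez_pos hβ X c.1).ne'
  have h3 : zq β μb X ≠ 0 := (zq_pos hβ X).ne'
  simp only [ContinuousLinearMap.neg_apply, ContinuousLinearMap.smul_apply, toCLM_single,
    smul_eq_mul, PP, qq]
  field_simp

lemma hasFDerivAt_QQ (hβ : 0 < β) (X : E N p) (a b : Fin N × Fin p) :
    HasFDerivAt (fun X => QQ β μb X a b) (toCLM fun c => TT β μb X a b c) X := by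
  have hAA : HasFDerivAt (fun X => AA β μb X a b)
      (toCLM fun c => -(2 * dD a b * drr β μb X b c) + QQ β μb X b c) X := by
    simp only [AA]
    refine hasFDerivAt_toCLM (((hasFDerivAt_const (eD a b) X).sub
      ((hasFDerivAt_rr (μb := μb) hβ X b).const_mul (2 * dD a b))).add
      (hasFDerivAt_PP (μb := μb) hβ X b)) ?_
    intro c
    simp only [ContinuousLinearMap.add_apply, ContinuousLinearMap.sub_apply,
      ContinuousLinearMap.smul_apply, ContinuousLinearMap.zero_apply, toCLM_single,
      smul_eq_mul]
    ring
  have H := ((hasFDerivAt_PP (μb := μb) hβ X a).mul hAA).const_mul β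
  have heq : (fun X => QQ β μb X a b) = fun X => β * (PP β μb X a * AA β μb X a b) := by
    funext Y; rw [QQ]; ring
  rw [heq]
  refine hasFDerivAt_toCLM H ?_
  intro c
  simp only [ContinuousLinearMap.smul_apply, ContinuousLinearMap.add_apply, toCLM_single,
    smul_eq_mul, TT]
  ring
end SMXaux
namespace SMXaux
variable {N p : ℕ} [NeZero N] [NeZero p] {β : ℝ} {μb : E N p}

lemma contDiff_ff (hβ : 0 < β) : ContDiff ℝ 3 (fun X : E N p => ff β μb X) := by
  have hez : ∀ k : Fin N, ContDiff ℝ 3 (fun X : E N p => ez β μb X k) := by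
    intro k
    simp only [ez]
    apply ContDiff.sum
    intro j _
    exact Real.contDiff_exp.comp
      (contDiff_const.mul (((ContinuousLinearMap.proj (R := ℝ)
        (φ := fun _ : Fin N × Fin p => ℝ) (k, j)).contDiff).add contDiff_const))
  have hzq : ContDiff ℝ 3 (fun X : E N p => zq β μb X) := by
    simp only [zq]
    exact ContDiff.sum fun k _ => (hez k).inv fun X => (ez_pos hβ X k).ne'
  have hlog : ContDiff ℝ 3 (fun X : E N p => Real.log (zq β μb X)) := by
    rw [contDiff_iff_contDiffAt]
    intro X
    exact hzq.contDiffAt.log (zq_pos hβ X).ne'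
  simp only [ff]
  exact (contDiff_const.mul hlog).neg

lemma ff_eq (hβ : 0 < β) (X : E N p) :
    smoothMinMax β (fun k j => X (k, j) + μb (k, j)) = ff β μb X := by
  have h1 : ∀ k, (softMax β fun j => X (k, j) + μb (k, j)) = β⁻¹ * Real.log (ez β μb X k) :=
    fun k => rfl
  have h2 : ∀ k, Real.exp (β * -(β⁻¹ * Real.log (ez β μb X k))) = (ez β μb X k)⁻¹ := by
    intro k
    rw [mul_neg, ← mul_assoc, mul_inv_cancel₀ hβ.ne', one_mul, Real.exp_neg,
      Real.exp_log (ez_pos hβ X k)]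
  show -softMax β (fun k => -softMax β fun j => X (k, j) + μb (k, j)) = ff β μb X
  simp only [h1]
  rw [ff, softMax]
  congr 3
  exact Finset.sum_congr rfl fun k _ => h2 k

lemma mComp_eq (hβ : 0 < β) (g : ℝ → ℝ) :
    mComp β μb g = fun X : E N p => g (ff β μb X) := by
  funext X
  rw [mComp, ff_eq hβ]

end SMXaux
namespace SMXaux
variable {N p : ℕ} [NeZero N] [NeZero p] {β : ℝ} {μb : E N p}

lemma hasFDerivAt_comp_g {u : ℝ → ℝ} (hu : Differentiable ℝ u) (hβ : 0 < β) (Y : E N p) :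
    HasFDerivAt (fun X : E N p => u (ff β μb X))
      (toCLM fun c => deriv u (ff β μb Y) * PP β μb Y c) Y := by
  have H : HasFDerivAt (fun X : E N p => u (ff β μb X))
      (deriv u (ff β μb Y) • toCLM (fun c => PP β μb Y c)) Y :=
    ((hu (ff β μb Y)).hasDerivAt).comp_hasFDerivAt Y (hasFDerivAt_ff hβ Y)
  refine hasFDerivAt_toCLM H ?_
  intro c
  simp [toCLM_single]

variable (β μb) in
noncomputable def M2 (g : ℝ → ℝ) (Y : E N p) (a b : Fin N × Fin p) : ℝ :=
  deriv (deriv g) (ff β μb Y) * PP β μb Y a * PP β μb Y b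
    + deriv g (ff β μb Y) * QQ β μb Y b a

variable (β μb) in
noncomputable def M3 (g : ℝ → ℝ) (Y : E N p) (a b c : Fin N × Fin p) : ℝ :=
  deriv (deriv (deriv g)) (ff β μb Y) * PP β μb Y a * PP β μb Y b * PP β μb Y c
    + deriv (deriv g) (ff β μb Y) * (QQ β μb Y b a * PP β μb Y c + PP β μb Y b * QQ β μb Y c a)
    + deriv (deriv g) (ff β μb Y) * PP β μb Y a * QQ β μb Y c b
    + deriv g (ff β μb Y) * TT β μb Y c b a

lemma hasFDerivAt_m (hβ : 0 < β) {g : ℝ → ℝ} (hg1 : Differentiable ℝ g) (Y : E N p) :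
    HasFDerivAt (mComp β μb g) (toCLM fun c => deriv g (ff β μb Y) * PP β μb Y c) Y := by
  rw [mComp_eq hβ g]
  exact hasFDerivAt_comp_g hg1 hβ Y

lemma hasFDerivAt_m1 (hβ : 0 < β) {g : ℝ → ℝ} (hg2 : Differentiable ℝ (deriv g))
    (Y : E N p) (b : Fin N × Fin p) :
    HasFDerivAt (fun Y => deriv g (ff β μb Y) * PP β μb Y b)
      (toCLM fun a => M2 β μb g Y a b) Y := by
  have H := (hasFDerivAt_comp_g (μb := μb) hg2 hβ Y).mul (hasFDerivAt_PP (μb := μb) hβ Y b)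
  refine hasFDerivAt_toCLM H ?_
  intro a
  simp only [ContinuousLinearMap.add_apply, ContinuousLinearMap.smul_apply, toCLM_single,
    smul_eq_mul, M2]
  ring

lemma hasFDerivAt_m2 (hβ : 0 < β) {g : ℝ → ℝ} (hg2 : Differentiable ℝ (deriv g))
    (hg3 : Differentiable ℝ (deriv (deriv g))) (Y : E N p) (b c : Fin N × Fin p) :
    HasFDerivAt (fun Y => M2 β μb g Y b c) (toCLM fun a => M3 β μb g Y a b c) Y := by
  have H := (((hasFDerivAt_comp_g (μb := μb) hg3 hβ Y).mul
      (hasFDerivAt_PP (μb := μb) hβ Y b)).mul (hasFDerivAt_PP (μb := μb) hβ Y c)).add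
    ((hasFDerivAt_comp_g (μb := μb) hg2 hβ Y).mul (hasFDerivAt_QQ (μb := μb) hβ Y c b))
  simp only [M2]
  refine hasFDerivAt_toCLM H ?_
  intro a
  simp only [ContinuousLinearMap.add_apply, ContinuousLinearMap.smul_apply, toCLM_single,
    smul_eq_mul, M3, Pi.mul_apply, Pi.add_apply]
  ring

lemma fderiv_apply_const {G : Type*} [NormedAddCommGroup G] [NormedSpace ℝ G]
    {F2 : E N p → (E N p →L[ℝ] G)} {X v : E N p} (h : DifferentiableAt ℝ F2 X) :
    fderiv ℝ (fun Y => F2 Y v) X = (fderiv ℝ F2 X).flip v := by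
  have := fderiv_clm_apply (𝕜 := ℝ) (c := F2) (u := fun _ => v) h (differentiableAt_const v)
  simpa using this

end SMXaux
namespace SMXaux
variable {N p : ℕ} [NeZero N] [NeZero p] {β : ℝ} {μb : E N p} {g : ℝ → ℝ}

lemma contDiff_deriv_g (hg : ContDiff ℝ 3 g) : ContDiff ℝ 2 (deriv g) :=
  (contDiff_succ_iff_deriv.mp ((show ((2 : WithTop ℕ∞) + 1) = 3 by norm_num) ▸ hg)).2.2

lemma contDiff_deriv2_g (hg : ContDiff ℝ 3 g) : ContDiff ℝ 1 (deriv (deriv g)) :=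
  (contDiff_succ_iff_deriv.mp
    ((show ((1 : WithTop ℕ∞) + 1) = 2 by norm_num) ▸ contDiff_deriv_g hg)).2.2

lemma contDiff_m (hβ : 0 < β) (hg : ContDiff ℝ 3 g) : ContDiff ℝ 3 (mComp β μb g) := by
  rw [mComp_eq hβ g]
  exact hg.comp (contDiff_ff hβ)

lemma key1 (hβ : 0 < β) (hg : ContDiff ℝ 3 g) (X : E N p) (a : Fin N × Fin p) :
    fderiv ℝ (mComp β μb g) X (Pi.single a 1) = deriv g (ff β μb X) * PP β μb X a := by
  rw [(hasFDerivAt_m hβ (hg.differentiable (by norm_num)) X).fderiv, toCLM_single]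

lemma keyfun (hβ : 0 < β) (hg : ContDiff ℝ 3 g) (c : Fin N × Fin p) :
    (fun Y : E N p => fderiv ℝ (mComp β μb g) Y (Pi.single c 1))
      = fun Y => deriv g (ff β μb Y) * PP β μb Y c :=
  funext fun Y => key1 hβ hg Y c

lemma keyfun2 (hβ : 0 < β) (hg : ContDiff ℝ 3 g) (b c : Fin N × Fin p) (Y : E N p) :
    fderiv ℝ (fderiv ℝ (mComp β μb g)) Y (Pi.single b 1) (Pi.single c 1)
      = M2 β μb g Y b c := by
  have hD1 : ContDiff ℝ 2 (fderiv ℝ (mComp β μb g)) :=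
    (contDiff_m hβ hg).fderiv_right (by norm_num)
  have h1 : fderiv ℝ (fderiv ℝ (mComp β μb g)) Y (Pi.single b 1) (Pi.single c 1)
      = fderiv ℝ (fun Z => fderiv ℝ (mComp β μb g) Z (Pi.single c 1)) Y (Pi.single b 1) := by
    rw [fderiv_apply_const (hD1.differentiable (by norm_num) Y)]
    rfl
  rw [h1, keyfun hβ hg c,
    (hasFDerivAt_m1 hβ ((contDiff_deriv_g hg).differentiable (by norm_num)) Y c).fderiv,
    toCLM_single]

lemma key2 (hβ : 0 < β) (hg : ContDiff ℝ 3 g) (X : E N p) (a b : Fin N × Fin p) :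
    iteratedFDeriv ℝ 2 (mComp β μb g) X ![Pi.single a 1, Pi.single b 1]
      = M2 β μb g X a b := by
  rw [iteratedFDeriv_two_apply]
  simp only [Matrix.cons_val_zero, Matrix.cons_val_one, Matrix.head_cons]
  exact keyfun2 hβ hg a b X

lemma key3 (hβ : 0 < β) (hg : ContDiff ℝ 3 g) (X : E N p) (a b c : Fin N × Fin p) :
    iteratedFDeriv ℝ 3 (mComp β μb g) X ![Pi.single a 1, Pi.single b 1, Pi.single c 1]
      = M3 β μb g X a b c := by
  have hD1 : ContDiff ℝ 2 (fderiv ℝ (mComp β μb g)) :=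
    (contDiff_m hβ hg).fderiv_right (by norm_num)
  have hD2 : ContDiff ℝ 1 (fderiv ℝ (fderiv ℝ (mComp β μb g))) :=
    hD1.fderiv_right (by norm_num)
  set sa := (Pi.single a 1 : E N p)
  set sb := (Pi.single b 1 : E N p)
  set sc := (Pi.single c 1 : E N p)
  have hinit : Fin.init ![sa, sb, sc] = ![sa, sb] := by
    funext i
    fin_cases i <;> rfl
  have e1 : iteratedFDeriv ℝ 3 (mComp β μb g) X ![sa, sb, sc]
      = iteratedFDeriv ℝ 2 (fderiv ℝ (mComp β μb g)) X ![sa, sb] sc := by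
    rw [iteratedFDeriv_succ_apply_right, hinit]
    rfl
  rw [e1, iteratedFDeriv_two_apply]
  simp only [Matrix.cons_val_zero, Matrix.cons_val_one, Matrix.head_cons]
  -- now : fderiv (fderiv (fderiv m)) X sa sb sc = M3
  set m := mComp β μb g
  set F1 := fderiv ℝ m
  set F2 := fderiv ℝ F1
  have hψd : DifferentiableAt ℝ (fun Y => F2 Y sb) X :=
    (hD2.differentiable (by norm_num) X).clm_apply (differentiableAt_const sb)
  have step1 : fderiv ℝ F2 X sa sb sc = fderiv ℝ (fun Y => F2 Y sb) X sa sc := by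
    rw [fderiv_apply_const (hD2.differentiable (by norm_num) X)]
    rfl
  have step2 : fderiv ℝ (fun Y => F2 Y sb) X sa sc
      = fderiv ℝ (fun Y => F2 Y sb sc) X sa := by
    rw [fderiv_apply_const hψd]
    rfl
  have step3 : (fun Y => F2 Y sb sc) = fun Y => M2 β μb g Y b c := by
    funext Y
    exact keyfun2 hβ hg b c Y
  rw [step1, step2, step3,
    (hasFDerivAt_m2 hβ ((contDiff_deriv_g hg).differentiable (by norm_num))
      ((contDiff_deriv2_g hg).differentiable (by norm_num)) X b c).fderiv, toCLM_single]

end SMXaux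
namespace SMXaux
variable {N p : ℕ} [NeZero N] [NeZero p] {β : ℝ} {μb : E N p}

lemma eD_nonneg (a b : Fin N × Fin p) : 0 ≤ eD a b := by
  rw [eD]; split_ifs <;> norm_num

lemma dD_nonneg (a b : Fin N × Fin p) : 0 ≤ dD a b := by
  rw [dD]; split_ifs <;> norm_num

lemma sum_eD (a : Fin N × Fin p) : ∑ b, eD a b = 1 := by
  simp [eD]

lemma sum_dD_rr (hβ : 0 < β) (X : E N p) (a : Fin N × Fin p) :
    ∑ b, dD a b * rr β μb X b = 1 := by
  rw [Fintype.sum_prod_type]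
  have h : ∀ k : Fin N, ∑ j, dD a (k, j) * rr β μb X (k, j)
      = if a.1 = k then (1 : ℝ) else 0 := by
    intro k
    by_cases h : a.1 = k
    · simp only [dD, if_pos h, one_mul]
      rw [rr_row_sum hβ X k]
    · simp [dD, h]
  simp [h]

lemma abs_AA_le (hβ : 0 < β) (X : E N p) (a b : Fin N × Fin p) :
    |AA β μb X a b| ≤ eD a b + 2 * dD a b * rr β μb X b + PP β μb X b := by
  rw [AA]
  calc |eD a b - 2 * dD a b * rr β μb X b + PP β μb X b|
      ≤ |eD a b - 2 * dD a b * rr β μb X b| + |PP β μb X b| := abs_add_le _ _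
    _ ≤ |eD a b| + |2 * dD a b * rr β μb X b| + |PP β μb X b| := by
        gcongr
        exact abs_sub _ _
    _ = eD a b + 2 * dD a b * rr β μb X b + PP β μb X b := by
        rw [abs_of_nonneg (eD_nonneg a b),
          abs_of_nonneg (mul_nonneg (mul_nonneg (by norm_num) (dD_nonneg a b))
            (rr_nonneg hβ X b)),
          abs_of_nonneg (PP_nonneg hβ X b)]

lemma sum_abs_AA (hβ : 0 < β) (X : E N p) (a : Fin N × Fin p) :
    ∑ b, |AA β μb X a b| ≤ 4 := by
  calc ∑ b, |AA β μb X a b|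
      ≤ ∑ b, (eD a b + 2 * dD a b * rr β μb X b + PP β μb X b) :=
        Finset.sum_le_sum fun b _ => abs_AA_le hβ X a b
    _ = (∑ b, eD a b) + (∑ b, 2 * dD a b * rr β μb X b) + ∑ b, PP β μb X b := by
        rw [Finset.sum_add_distrib, Finset.sum_add_distrib]
    _ = (∑ b, eD a b) + 2 * (∑ b, dD a b * rr β μb X b) + ∑ b, PP β μb X b := by
        congr 2
        rw [Finset.mul_sum]
        exact Finset.sum_congr rfl fun b _ => by ring
    _ = 4 := by rw [sum_eD, sum_dD_rr hβ, PP_sum hβ]; norm_num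

lemma abs_QQ_le (hβ : 0 < β) (X : E N p) (a c : Fin N × Fin p) :
    |QQ β μb X a c| = β * PP β μb X a * |AA β μb X a c| := by
  rw [QQ, abs_mul, abs_mul, abs_of_pos hβ, abs_of_nonneg (PP_nonneg hβ X a)]

lemma sum_abs_QQ_row (hβ : 0 < β) (X : E N p) (a : Fin N × Fin p) :
    ∑ c, |QQ β μb X a c| ≤ 4 * β * PP β μb X a := by
  calc ∑ c, |QQ β μb X a c| = β * PP β μb X a * ∑ c, |AA β μb X a c| := by
        rw [Finset.mul_sum]
        exact Finset.sum_congr rfl fun c _ => abs_QQ_le hβ X a c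
    _ ≤ β * PP β μb X a * 4 :=
        mul_le_mul_of_nonneg_left (sum_abs_AA hβ X a)
          (mul_nonneg hβ.le (PP_nonneg (μb := μb) hβ X a))
    _ = 4 * β * PP β μb X a := by ring

lemma sum_abs_QQ (hβ : 0 < β) (X : E N p) :
    ∑ a, ∑ c, |QQ β μb X a c| ≤ 4 * β := by
  calc ∑ a, ∑ c, |QQ β μb X a c| ≤ ∑ a, 4 * β * PP β μb X a :=
        Finset.sum_le_sum fun a _ => sum_abs_QQ_row hβ X a
    _ = 4 * β := by rw [← Finset.mul_sum, PP_sum hβ, mul_one]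

lemma sum_abs_drr_row (hβ : 0 < β) (X : E N p) (b : Fin N × Fin p) :
    ∑ c, |drr β μb X b c| ≤ 2 * β * rr β μb X b := by
  have h : ∀ c, |drr β μb X b c| ≤ β * rr β μb X b * (eD b c + dD b c * rr β μb X c) := by
    intro c
    rw [drr, abs_mul, abs_mul, abs_of_pos hβ, abs_of_nonneg (rr_nonneg hβ X b)]
    have habs : |eD b c - dD b c * rr β μb X c| ≤ eD b c + dD b c * rr β μb X c := by
      refine (abs_sub _ _).trans ?_
      rw [abs_of_nonneg (eD_nonneg b c),
        abs_of_nonneg (mul_nonneg (dD_nonneg b c) (rr_nonneg hβ X c))]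
    exact mul_le_mul_of_nonneg_left habs (mul_nonneg hβ.le (rr_nonneg hβ X b))
  calc ∑ c, |drr β μb X b c|
      ≤ ∑ c, β * rr β μb X b * (eD b c + dD b c * rr β μb X c) :=
        Finset.sum_le_sum fun c _ => h c
    _ = β * rr β μb X b * ((∑ c, eD b c) + ∑ c, dD b c * rr β μb X c) := by
        rw [← Finset.mul_sum, Finset.sum_add_distrib]
    _ = 2 * β * rr β μb X b := by rw [sum_eD, sum_dD_rr hβ]; ring

end SMXaux
namespace SMXaux
variable {N p : ℕ} [NeZero N] [NeZero p] {β : ℝ} {μb : E N p}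

lemma abs_TT_le (hβ : 0 < β) (X : E N p) (x y z : Fin N × Fin p) :
    |TT β μb X x y z| ≤ β * (|QQ β μb X x z| * |AA β μb X x y|
      + PP β μb X x * (2 * dD x y * |drr β μb X y z| + |QQ β μb X y z|)) := by
  rw [TT, abs_mul, abs_of_pos hβ]
  refine mul_le_mul_of_nonneg_left ?_ hβ.le
  have h3 : |-(2 * dD x y * drr β μb X y z) + QQ β μb X y z|
      ≤ 2 * dD x y * |drr β μb X y z| + |QQ β μb X y z| := by
    refine (abs_add_le _ _).trans ?_
    rw [abs_neg, abs_mul, abs_of_nonneg (mul_nonneg (by norm_num) (dD_nonneg x y))]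
  calc |QQ β μb X x z * AA β μb X x y
        + PP β μb X x * (-(2 * dD x y * drr β μb X y z) + QQ β μb X y z)|
      ≤ |QQ β μb X x z * AA β μb X x y|
        + |PP β μb X x * (-(2 * dD x y * drr β μb X y z) + QQ β μb X y z)| := abs_add_le _ _
    _ = |QQ β μb X x z| * |AA β μb X x y|
        + PP β μb X x * |-(2 * dD x y * drr β μb X y z) + QQ β μb X y z| := by
        rw [abs_mul, abs_mul, abs_of_nonneg (PP_nonneg hβ X x)]
    _ ≤ |QQ β μb X x z| * |AA β μb X x y|
        + PP β μb X x * (2 * dD x y * |drr β μb X y z| + |QQ β μb X y z|) :=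
        add_le_add le_rfl (mul_le_mul_of_nonneg_left h3 (PP_nonneg hβ X x))

lemma sum_abs_TT_z (hβ : 0 < β) (X : E N p) (x y : Fin N × Fin p) :
    ∑ z, |TT β μb X x y z| ≤ β * ((4 * β * PP β μb X x) * |AA β μb X x y|
      + PP β μb X x * (2 * dD x y * (2 * β * rr β μb X y) + 4 * β * PP β μb X y)) := by
  calc ∑ z, |TT β μb X x y z|
      ≤ ∑ z, β * (|QQ β μb X x z| * |AA β μb X x y|
          + PP β μb X x * (2 * dD x y * |drr β μb X y z| + |QQ β μb X y z|)) :=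
        Finset.sum_le_sum fun z _ => abs_TT_le hβ X x y z
    _ = β * ((∑ z, |QQ β μb X x z|) * |AA β μb X x y|
          + PP β μb X x * (2 * dD x y * (∑ z, |drr β μb X y z|) + ∑ z, |QQ β μb X y z|)) := by
        rw [← Finset.mul_sum]
        congr 1
        rw [Finset.sum_add_distrib, ← Finset.sum_mul, ← Finset.mul_sum]
        congr 1
        rw [Finset.sum_add_distrib, ← Finset.mul_sum]
    _ ≤ β * ((4 * β * PP β μb X x) * |AA β μb X x y|
          + PP β μb X x * (2 * dD x y * (2 * β * rr β μb X y) + 4 * β * PP β μb X y)) := by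
        refine mul_le_mul_of_nonneg_left (add_le_add ?_ ?_) hβ.le
        · exact mul_le_mul_of_nonneg_right (sum_abs_QQ_row hβ X x) (abs_nonneg _)
        · refine mul_le_mul_of_nonneg_left
            (add_le_add ?_ (sum_abs_QQ_row hβ X y)) (PP_nonneg hβ X x)
          exact mul_le_mul_of_nonneg_left (sum_abs_drr_row hβ X y)
            (mul_nonneg (by norm_num) (dD_nonneg x y))

lemma sum_abs_TT_yz (hβ : 0 < β) (X : E N p) (x : Fin N × Fin p) :
    ∑ y, ∑ z, |TT β μb X x y z| ≤ 24 * β ^ 2 * PP β μb X x := by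
  calc ∑ y, ∑ z, |TT β μb X x y z|
      ≤ ∑ y, (β * (4 * β * PP β μb X x) * |AA β μb X x y|
          + (β * PP β μb X x * (4 * β) * (dD x y * rr β μb X y)
            + β * PP β μb X x * (4 * β) * PP β μb X y)) := by
        refine Finset.sum_le_sum fun y _ => (sum_abs_TT_z hβ X x y).trans (le_of_eq (by ring))
    _ = β * (4 * β * PP β μb X x) * (∑ y, |AA β μb X x y|)
          + (β * PP β μb X x * (4 * β) * (∑ y, dD x y * rr β μb X y)
            + β * PP β μb X x * (4 * β) * (∑ y, PP β μb X y)) := by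
        rw [Finset.sum_add_distrib, Finset.sum_add_distrib, ← Finset.mul_sum, ← Finset.mul_sum,
          ← Finset.mul_sum]
    _ ≤ β * (4 * β * PP β μb X x) * 4
          + (β * PP β μb X x * (4 * β) * 1 + β * PP β μb X x * (4 * β) * 1) := by
        have h0 : (0:ℝ) ≤ β * (4 * β * PP β μb X x) :=
          mul_nonneg hβ.le (mul_nonneg (by positivity) (PP_nonneg hβ X x))
        refine add_le_add (mul_le_mul_of_nonneg_left (sum_abs_AA hβ X x) h0) ?_
        rw [sum_dD_rr hβ, PP_sum hβ]
    _ = 24 * β ^ 2 * PP β μb X x := by ring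

lemma sum_abs_TT (hβ : 0 < β) (X : E N p) :
    ∑ x, ∑ y, ∑ z, |TT β μb X x y z| ≤ 24 * β ^ 2 := by
  calc ∑ x, ∑ y, ∑ z, |TT β μb X x y z| ≤ ∑ x, 24 * β ^ 2 * PP β μb X x :=
        Finset.sum_le_sum fun x _ => sum_abs_TT_yz hβ X x
    _ = 24 * β ^ 2 := by rw [← Finset.mul_sum, PP_sum hβ, mul_one]

end SMXaux

/-- Bounds for the sums of the absolute first, second and third partial derivatives of
`m = g ∘ G_β( · + μ̄)`. -/
theorem mComp_derivative_bounds (β : ℝ) (hβ : 0 < β) (N p : ℕ) [NeZero N] [NeZero p]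
    (μb : Fin N × Fin p → ℝ) (g : ℝ → ℝ) (hg : ContDiff ℝ 3 g)
    (B1 B2 B3 : ℝ)
    (hB1 : ∀ t, |deriv g t| ≤ B1)
    (hB2 : ∀ t, |deriv (deriv g) t| ≤ B2)
    (hB3 : ∀ t, |deriv (deriv (deriv g)) t| ≤ B3)
    (X : Fin N × Fin p → ℝ) :
    (∑ a : Fin N × Fin p, |fderiv ℝ (mComp β μb g) X (Pi.single a 1)| ≤ B1) ∧
    (∑ a : Fin N × Fin p, ∑ b : Fin N × Fin p,
        |iteratedFDeriv ℝ 2 (mComp β μb g) X ![Pi.single a 1, Pi.single b 1]| ≤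
      B2 + 4 * β * B1) ∧
    (∑ a : Fin N × Fin p, ∑ b : Fin N × Fin p, ∑ c : Fin N × Fin p,
        |iteratedFDeriv ℝ 3 (mComp β μb g) X
            ![Pi.single a 1, Pi.single b 1, Pi.single c 1]| ≤
      B3 + 16 * β * B2 + 24 * β ^ 2 * B1) := by
  open SMXaux in
  have hB1' : 0 ≤ B1 := (abs_nonneg _).trans (hB1 0)
  have hB2' : 0 ≤ B2 := (abs_nonneg _).trans (hB2 0)
  have hB3' : 0 ≤ B3 := (abs_nonneg _).trans (hB3 0)
  have htriple : ∀ F : (Fin N × Fin p) → (Fin N × Fin p) → (Fin N × Fin p) → ℝ,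
      ∑ a, ∑ b, ∑ c, F a b c = ∑ c, ∑ b, ∑ a, F a b c := by
    intro F
    rw [show ∑ a, ∑ b, ∑ c, F a b c = ∑ a, ∑ c, ∑ b, F a b c from
      Finset.sum_congr rfl fun a _ => Finset.sum_comm]
    rw [Finset.sum_comm]
    exact Finset.sum_congr rfl fun c _ => Finset.sum_comm
  refine ⟨?_, ?_, ?_⟩
  · -- first derivatives
    calc ∑ a : Fin N × Fin p, |fderiv ℝ (mComp β μb g) X (Pi.single a 1)|
        = ∑ a, |deriv g (ff β μb X)| * PP β μb X a := by
          refine Finset.sum_congr rfl fun a _ => ?_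
          rw [key1 hβ hg X a, abs_mul, abs_of_nonneg (PP_nonneg hβ X a)]
      _ = |deriv g (ff β μb X)| := by rw [← Finset.mul_sum, PP_sum hβ, mul_one]
      _ ≤ B1 := hB1 _
  · -- second derivatives
    have hpt : ∀ a b : Fin N × Fin p, |M2 β μb g X a b|
        ≤ B2 * (PP β μb X a * PP β μb X b) + B1 * |QQ β μb X b a| := by
      intro a b
      calc |M2 β μb g X a b|
          ≤ |deriv (deriv g) (ff β μb X) * PP β μb X a * PP β μb X b|
            + |deriv g (ff β μb X) * QQ β μb X b a| := abs_add_le _ _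
        _ = |deriv (deriv g) (ff β μb X)| * (PP β μb X a * PP β μb X b)
            + |deriv g (ff β μb X)| * |QQ β μb X b a| := by
            rw [abs_mul, abs_mul, abs_mul, abs_of_nonneg (PP_nonneg hβ X a),
              abs_of_nonneg (PP_nonneg hβ X b), mul_assoc]
        _ ≤ B2 * (PP β μb X a * PP β μb X b) + B1 * |QQ β μb X b a| :=
            add_le_add
              (mul_le_mul_of_nonneg_right (hB2 _)
                (mul_nonneg (PP_nonneg hβ X a) (PP_nonneg hβ X b)))
              (mul_le_mul_of_nonneg_right (hB1 _) (abs_nonneg _))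
    calc ∑ a : Fin N × Fin p, ∑ b : Fin N × Fin p,
          |iteratedFDeriv ℝ 2 (mComp β μb g) X ![Pi.single a 1, Pi.single b 1]|
        = ∑ a, ∑ b, |M2 β μb g X a b| := by
          refine Finset.sum_congr rfl fun a _ => Finset.sum_congr rfl fun b _ => ?_
          rw [key2 hβ hg X a b]
      _ ≤ ∑ a, ∑ b, (B2 * (PP β μb X a * PP β μb X b) + B1 * |QQ β μb X b a|) :=
          Finset.sum_le_sum fun a _ => Finset.sum_le_sum fun b _ => hpt a b
      _ = B2 * ∑ a, ∑ b, (PP β μb X a * PP β μb X b)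
            + B1 * ∑ a, ∑ b, |QQ β μb X b a| := by
          simp only [Finset.sum_add_distrib, Finset.mul_sum]
      _ ≤ B2 * 1 + B1 * (4 * β) := by
          have e1 : ∑ a, ∑ b, (PP β μb X a * PP β μb X b) = 1 := by
            simp_rw [← Finset.mul_sum, PP_sum hβ, mul_one]
            exact PP_sum hβ X
          have e2 : ∑ a, ∑ b, |QQ β μb X b a| ≤ 4 * β := by
            rw [Finset.sum_comm]
            exact sum_abs_QQ hβ X
          rw [e1]
          exact add_le_add le_rfl (mul_le_mul_of_nonneg_left e2 hB1')
      _ = B2 + 4 * β * B1 := by ring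
  · -- third derivatives
    have hpt : ∀ a b c : Fin N × Fin p, |M3 β μb g X a b c|
        ≤ B3 * (PP β μb X a * PP β μb X b * PP β μb X c)
          + B2 * (|QQ β μb X b a| * PP β μb X c)
          + B2 * (PP β μb X b * |QQ β μb X c a|)
          + B2 * (PP β μb X a * |QQ β μb X c b|)
          + B1 * |TT β μb X c b a| := by
      intro a b c
      have hP := PP_nonneg (μb := μb) hβ X
      calc |M3 β μb g X a b c|
          ≤ |deriv (deriv (deriv g)) (ff β μb X) * PP β μb X a * PP β μb X b * PP β μb X c|
            + |deriv (deriv g) (ff β μb X)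
                * (QQ β μb X b a * PP β μb X c + PP β μb X b * QQ β μb X c a)|
            + |deriv (deriv g) (ff β μb X) * PP β μb X a * QQ β μb X c b|
            + |deriv g (ff β μb X) * TT β μb X c b a| := by
            refine (abs_add_le _ _).trans (add_le_add ?_ le_rfl)
            refine (abs_add_le _ _).trans (add_le_add ?_ le_rfl)
            exact abs_add_le _ _
        _ ≤ B3 * (PP β μb X a * PP β μb X b * PP β μb X c)
            + B2 * (|QQ β μb X b a| * PP β μb X c + PP β μb X b * |QQ β μb X c a|)
            + B2 * (PP β μb X a * |QQ β μb X c b|)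
            + B1 * |TT β μb X c b a| := by
            refine add_le_add (add_le_add (add_le_add ?_ ?_) ?_) ?_
            · rw [abs_mul, abs_mul, abs_mul, abs_of_nonneg (hP a), abs_of_nonneg (hP b),
                abs_of_nonneg (hP c), mul_assoc, mul_assoc, ← mul_assoc (PP β μb X a)]
              exact mul_le_mul_of_nonneg_right (hB3 _)
                (mul_nonneg (mul_nonneg (hP a) (hP b)) (hP c))
            · rw [abs_mul]
              refine mul_le_mul (hB2 _) ?_ (abs_nonneg _) hB2'
              refine (abs_add_le _ _).trans ?_
              rw [abs_mul, abs_mul, abs_of_nonneg (hP c), abs_of_nonneg (hP b)]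
            · rw [abs_mul, abs_mul, abs_of_nonneg (hP a), mul_assoc]
              exact mul_le_mul_of_nonneg_right (hB2 _)
                (mul_nonneg (hP a) (abs_nonneg _))
            · rw [abs_mul]
              exact mul_le_mul_of_nonneg_right (hB1 _) (abs_nonneg _)
        _ = B3 * (PP β μb X a * PP β μb X b * PP β μb X c)
            + B2 * (|QQ β μb X b a| * PP β μb X c)
            + B2 * (PP β μb X b * |QQ β μb X c a|)
            + B2 * (PP β μb X a * |QQ β μb X c b|)
            + B1 * |TT β μb X c b a| := by ring
    calc ∑ a : Fin N × Fin p, ∑ b : Fin N × Fin p, ∑ c : Fin N × Fin p,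
          |iteratedFDeriv ℝ 3 (mComp β μb g) X
            ![Pi.single a 1, Pi.single b 1, Pi.single c 1]|
        = ∑ a, ∑ b, ∑ c, |M3 β μb g X a b c| := by
          refine Finset.sum_congr rfl fun a _ => Finset.sum_congr rfl fun b _ =>
            Finset.sum_congr rfl fun c _ => ?_
          rw [key3 hβ hg X a b c]
      _ ≤ ∑ a, ∑ b, ∑ c,
            (B3 * (PP β μb X a * PP β μb X b * PP β μb X c)
              + B2 * (|QQ β μb X b a| * PP β μb X c)
              + B2 * (PP β μb X b * |QQ β μb X c a|)
              + B2 * (PP β μb X a * |QQ β μb X c b|)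
              + B1 * |TT β μb X c b a|) :=
          Finset.sum_le_sum fun a _ => Finset.sum_le_sum fun b _ =>
            Finset.sum_le_sum fun c _ => hpt a b c
      _ = B3 * (∑ a, ∑ b, ∑ c, PP β μb X a * PP β μb X b * PP β μb X c)
            + B2 * (∑ a, ∑ b, ∑ c, |QQ β μb X b a| * PP β μb X c)
            + B2 * (∑ a, ∑ b, ∑ c, PP β μb X b * |QQ β μb X c a|)
            + B2 * (∑ a, ∑ b, ∑ c, PP β μb X a * |QQ β μb X c b|)
            + B1 * (∑ a, ∑ b, ∑ c, |TT β μb X c b a|) := by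
          simp only [Finset.sum_add_distrib, Finset.mul_sum]
      _ ≤ B3 * 1 + B2 * (4 * β) + B2 * (4 * β) + B2 * (4 * β) + B1 * (24 * β ^ 2) := by
          have e0 : ∑ a, ∑ b, ∑ c, PP β μb X a * PP β μb X b * PP β μb X c = 1 := by
            simp_rw [← Finset.mul_sum, PP_sum hβ, mul_one]
            simp_rw [← Finset.mul_sum, PP_sum hβ, mul_one]
            exact PP_sum hβ X
          have e1 : ∑ a, ∑ b, ∑ c, |QQ β μb X b a| * PP β μb X c ≤ 4 * β := by
            simp_rw [← Finset.mul_sum, PP_sum hβ, mul_one]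
            rw [Finset.sum_comm]
            exact sum_abs_QQ hβ X
          have e2 : ∑ a, ∑ b, ∑ c, PP β μb X b * |QQ β μb X c a| ≤ 4 * β := by
            simp_rw [← Finset.mul_sum, ← Finset.sum_mul, PP_sum hβ, one_mul]
            rw [Finset.sum_comm]
            exact sum_abs_QQ hβ X
          have e3 : ∑ a, ∑ b, ∑ c, PP β μb X a * |QQ β μb X c b| ≤ 4 * β := by
            simp_rw [← Finset.mul_sum, ← Finset.sum_mul, PP_sum hβ, one_mul]
            rw [Finset.sum_comm]
            exact sum_abs_QQ hβ X
          have e4 : ∑ a, ∑ b, ∑ c, |TT β μb X c b a| ≤ 24 * β ^ 2 := by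
            rw [htriple]
            exact sum_abs_TT hβ X
          rw [e0]
          exact add_le_add (add_le_add (add_le_add (add_le_add le_rfl
            (mul_le_mul_of_nonneg_left e1 hB2')) (mul_le_mul_of_nonneg_left e2 hB2'))
            (mul_le_mul_of_nonneg_left e3 hB2')) (mul_le_mul_of_nonneg_left e4 hB1')
      _ ≤ B3 + 16 * β * B2 + 24 * β ^ 2 * B1 := by nlinarith [mul_nonneg hβ.le hB2']
end

section
/- Let β > 0, N, p ≥ 1 with Np ≥ 2, μ̄ ∈ ℝ^{N×p}, and let g : ℝ → ℝ be three times continuously differentiable with bounded first, second and third derivatives; define m(X) := g(G_β(X + μ̄)). For each triple (k,j) = ((k₁,j₁),(k₂,j₂),(k₃,j₃)) ∈ ([N]×[p])³ and x ∈ ℝ^{N×p}, set U_{(k,j)}(x) := sup{ |∂³m/∂X_{k₁j₁}∂X_{k₂j₂}∂X_{k₃j₃}(x + y)| : y ∈ ℝ^{N×p}, max_{m∈[N],ℓ∈[p]} |y_{mℓ}| ≤ β^{-1} }. Then for every x ∈ ℝ^{N×p}: Σ over all triples (k,j) ∈ ([N]×[p])³ of U_{(k,j)}(x) ≤ e^{12}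 · (‖g'''‖_∞ + 16β‖g''‖_∞ + 24β²‖g'‖_∞). -/
/-!
Write `G` for the smooth MinMax of the shifted matrix `Y = X + μ̄`. Its gradient is the
probability vector `P_a = π_{a₁} w_a` (`minMaxWeight`), where `w` (`rowWeight`) is the softmax
of the row of `a` and `π` (`rowProb`) the softmax over rows of `-log Σ_j exp (β Y_{kj})`, and
`∂_b P_c = β P_c ℓ_cb` with `ℓ_cb = δ_cb - 2 δ_{c₁b₁} w_b + P_b` (`weightScore`). The chain rule
for `g ∘ G` expresses each third partial through `g'`, `g''`, `g'''`, `P`, `ℓ` and `∂ℓ`; turning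
every minus sign into a plus gives a nonnegative majorant whose sum over all triples is
`B₃ + 12 β B₂ + 24 β² B₁`, because `P` and every row of `w` are probability vectors. Moving each
entry by at most `β⁻¹` changes every `exp (β Y_a)`, hence every partition function, by a factor
in `[e⁻¹, e]`; so `w` and `π` grow by at most `e²`, `P` by at most `e⁴`, and each monomial of the
majorant, of degree at most three in `P` and `w`, by at most `e¹²`.
-/

section Kronecker

variable {α : Type*} [DecidableEq α]

def kronecker (a b : α) : ℝ := if a = b then 1 else 0

lemma kronecker_nonneg (a b : α) : 0 ≤ kronecker a b := by
  unfold kronecker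
  split_ifs <;> norm_num

variable [Fintype α]

lemma sum_kronecker (a : α) : ∑ b, kronecker a b = 1 := by
  simp [kronecker]

lemma sum_mul_kronecker (f : α → ℝ) (b : α) : ∑ i, f i * kronecker i b = f b := by
  simp [kronecker]

end Kronecker

section AbsBounds

variable {x y X Y : ℝ}

lemma abs_mul_le_mul_of_abs_le (hx : |x| ≤ X) (hy : |y| ≤ Y) : |x * y| ≤ X * Y := by
  rw [abs_mul]
  exact mul_le_mul hx hy (abs_nonneg y) ((abs_nonneg x).trans hx)

lemma abs_add_le_add_of_abs_le (hx : |x| ≤ X) (hy : |y| ≤ Y) : |x + y| ≤ X + Y :=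
  (abs_add_le x y).trans (add_le_add hx hy)

lemma abs_sub_le_add_of_abs_le (hx : |x| ≤ X) (hy : |y| ≤ Y) : |x - y| ≤ X + Y :=
  (abs_sub x y).trans (add_le_add hx hy)

end AbsBounds

section PartialDerivatives

variable {ι : Type*} [DecidableEq ι]

def HasPartials (f : (ι → ℝ) → ℝ) (f' : ι → (ι → ℝ) → ℝ) : Prop :=
  Differentiable ℝ f ∧ ∀ b Y, fderiv ℝ f Y (Pi.single b 1) = f' b Y

namespace HasPartials

variable {f g : (ι → ℝ) → ℝ} {f' f'' g' : ι → (ι → ℝ) → ℝ}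

lemma of_hasFDerivAt {L : (ι → ℝ) → (ι → ℝ) →L[ℝ] ℝ} (hf : ∀ Y, HasFDerivAt f (L Y) Y)
    (hL : ∀ b Y, L Y (Pi.single b 1) = f' b Y) : HasPartials f f' :=
  ⟨fun Y => (hf Y).differentiableAt, fun b Y => by rw [(hf Y).fderiv, hL]⟩

lemma congr (hf : HasPartials f f') (h : ∀ b Y, f' b Y = f'' b Y) : HasPartials f f'' :=
  ⟨hf.1, fun b Y => (hf.2 b Y).trans (h b Y)⟩

lemma const (c : ℝ) : HasPartials (fun _ : ι → ℝ => c) (fun _ _ => 0) :=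
  of_hasFDerivAt (fun _ => hasFDerivAt_const c _) fun _ _ => rfl

lemma apply (a : ι) : HasPartials (fun Y : ι → ℝ => Y a) (fun b _ => kronecker a b) :=
  of_hasFDerivAt (fun Y => hasFDerivAt_apply a Y) fun b _ => by
    simp [kronecker, Pi.single_apply]

variable [Fintype ι]

lemma add (hf : HasPartials f f') (hg : HasPartials g g') :
    HasPartials (fun Y => f Y + g Y) (fun b Y => f' b Y + g' b Y) :=
  ⟨hf.1.add hg.1, fun b Y => by simp [fderiv_fun_add (hf.1 Y) (hg.1 Y), hf.2, hg.2]⟩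

lemma sub (hf : HasPartials f f') (hg : HasPartials g g') :
    HasPartials (fun Y => f Y - g Y) (fun b Y => f' b Y - g' b Y) :=
  ⟨hf.1.sub hg.1, fun b Y => by simp [fderiv_fun_sub (hf.1 Y) (hg.1 Y), hf.2, hg.2]⟩

lemma neg (hf : HasPartials f f') : HasPartials (fun Y => -f Y) (fun b Y => -f' b Y) :=
  ⟨hf.1.neg, fun b Y => by simp [fderiv_fun_neg, hf.2]⟩

lemma const_mul (c : ℝ) (hf : HasPartials f f') :
    HasPartials (fun Y => c * f Y) (fun b Y => c * f' b Y) :=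
  ⟨hf.1.const_mul c, fun b Y => by simp [fderiv_const_mul (hf.1 Y), hf.2]⟩

lemma mul (hf : HasPartials f f') (hg : HasPartials g g') :
    HasPartials (fun Y => f Y * g Y) (fun b Y => f' b Y * g Y + f Y * g' b Y) :=
  ⟨hf.1.mul hg.1, fun b Y => by simp [fderiv_fun_mul (hf.1 Y) (hg.1 Y), hf.2, hg.2]; ring⟩

lemma sum {κ : Type*} {s : Finset κ} {u : κ → (ι → ℝ) → ℝ} {u' : κ → ι → (ι → ℝ) → ℝ}
    (hu : ∀ i ∈ s, HasPartials (u i) (u' i)) :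
    HasPartials (fun Y => ∑ i ∈ s, u i Y) (fun b Y => ∑ i ∈ s, u' i b Y) :=
  ⟨Differentiable.fun_sum fun i hi => (hu i hi).1, fun b Y => by
    rw [fderiv_fun_sum fun i hi => (hu i hi).1 Y, _root_.sum_apply]
    exact Finset.sum_congr rfl fun i hi => (hu i hi).2 b Y⟩

lemma comp {h h' : ℝ → ℝ} (hf : HasPartials f f') (hh : ∀ Y, HasDerivAt h (h' (f Y)) (f Y)) :
    HasPartials (fun Y => h (f Y)) (fun b Y => h' (f Y) * f' b Y) :=
  of_hasFDerivAt (fun Y => (hh Y).comp_hasFDerivAt Y (hf.1 Y).hasFDerivAt) fun b Y => by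
    simp [hf.2]

lemma exp (hf : HasPartials f f') :
    HasPartials (fun Y => Real.exp (f Y)) (fun b Y => Real.exp (f Y) * f' b Y) :=
  hf.comp fun Y => Real.hasDerivAt_exp (f Y)

lemma log (hf : HasPartials f f') (hpos : ∀ Y, f Y ≠ 0) :
    HasPartials (fun Y => Real.log (f Y)) (fun b Y => (f Y)⁻¹ * f' b Y) :=
  hf.comp fun Y => Real.hasDerivAt_log (hpos Y)

end HasPartials

end PartialDerivatives

section ThirdDerivative

variable {ι : Type*} [Fintype ι] [DecidableEq ι]

lemma iteratedFDeriv_three_single {f : (ι → ℝ) → ℝ} {f₁ : ι → (ι → ℝ) → ℝ}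
    {f₂ : ι → ι → (ι → ℝ) → ℝ} {f₃ : ι → ι → ι → (ι → ℝ) → ℝ} (hf : ContDiff ℝ 3 f)
    (h₁ : HasPartials f f₁) (h₂ : ∀ c, HasPartials (f₁ c) (f₂ c))
    (h₃ : ∀ c b, HasPartials (f₂ c b) (f₃ c b)) (Y : ι → ℝ) (a b c : ι) :
    iteratedFDeriv ℝ 3 f Y ![Pi.single a 1, Pi.single b 1, Pi.single c 1] = f₃ c b a Y := by
  have hf₂ : ∀ y, iteratedFDeriv ℝ 2 f y ![Pi.single b 1, Pi.single c 1] = f₂ c b y := by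
    intro y
    rw [(hf.differentiable_iteratedFDeriv (m := 1) (by norm_num) y).iteratedFDeriv_succ_apply_left']
    simp only [iteratedFDeriv_one_apply, Fin.tail, Matrix.cons_val_succ, Matrix.cons_val_zero,
      h₁.2]
    exact (h₂ c).2 b y
  rw [(hf.differentiable_iteratedFDeriv (m := 2) (by norm_num) Y).iteratedFDeriv_succ_apply_left']
  change fderiv ℝ (fun y => iteratedFDeriv ℝ 2 f y ![Pi.single b 1, Pi.single c 1]) Y
    (Pi.single a 1) = _
  simp only [hf₂]
  exact (h₃ c b).2 a Y

variable {G : (ι → ℝ) → ℝ} {G₁ : ι → (ι → ℝ) → ℝ} {G₂ : ι → ι → (ι → ℝ) → ℝ}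
  {G₃ : ι → ι → ι → (ι → ℝ) → ℝ} {g : ℝ → ℝ}

theorem iteratedFDeriv_comp_three_single (hg : ContDiff ℝ 3 g) (hG : ContDiff ℝ 3 G)
    (h₁ : HasPartials G G₁) (h₂ : ∀ c, HasPartials (G₁ c) (G₂ c))
    (h₃ : ∀ c b, HasPartials (G₂ c b) (G₃ c b)) (Y : ι → ℝ) (a b c : ι) :
    iteratedFDeriv ℝ 3 (fun Y => g (G Y)) Y ![Pi.single a 1, Pi.single b 1, Pi.single c 1] =
      deriv (deriv (deriv g)) (G Y) * (G₁ a Y * G₁ b Y * G₁ c Y)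
        + deriv (deriv g) (G Y) * (G₂ b a Y * G₁ c Y + G₁ b Y * G₂ c a Y + G₁ a Y * G₂ c b Y)
        + deriv g (G Y) * G₃ c b a Y := by
  have hg₁ : ContDiff ℝ 2 (deriv g) := hg.deriv'
  have hg₂ : ContDiff ℝ 1 (deriv (deriv g)) := hg₁.deriv'
  have hd : ∀ {h : ℝ → ℝ}, Differentiable ℝ h → ∀ Y, HasDerivAt h (deriv h (G Y)) (G Y) :=
    fun hh Y => (hh _).hasDerivAt
  have hg₀ := h₁.comp (hd (hg.differentiable (by norm_num)))
  have hd₁ := h₁.comp (hd (hg₁.differentiable (by norm_num)))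
  have hd₂ := h₁.comp (hd (hg₂.differentiable (by norm_num)))
  rw [iteratedFDeriv_three_single (f := fun Y => g (G Y)) (hg.comp hG) hg₀
    (fun c => hd₁.mul (h₂ c)) (fun c b => ((hd₂.mul (h₂ b)).mul (h₂ c)).add (hd₁.mul (h₃ c b)))]
  ring

end ThirdDerivative

section Softmax

variable {κ : Type*} [Fintype κ]

noncomputable def logSumExp (u : κ → ℝ) : ℝ := Real.log (∑ i, Real.exp (u i))

noncomputable def softmax (u : κ → ℝ) (i : κ) : ℝ := Real.exp (u i) / ∑ j, Real.exp (u j)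

variable [Nonempty κ]

lemma sum_exp_pos (u : κ → ℝ) : 0 < ∑ i, Real.exp (u i) :=
  Finset.sum_pos (fun _ _ => Real.exp_pos _) Finset.univ_nonempty

lemma softmax_pos (u : κ → ℝ) (i : κ) : 0 < softmax u i :=
  div_pos (Real.exp_pos _) (sum_exp_pos u)

lemma sum_softmax (u : κ → ℝ) : ∑ i, softmax u i = 1 := by
  simp only [softmax, ← Finset.sum_div]
  exact div_self (sum_exp_pos u).ne'

lemma exp_sub_logSumExp (u : κ → ℝ) (i : κ) : Real.exp (u i - logSumExp u) = softmax u i := by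
  rw [Real.exp_sub, logSumExp, Real.exp_log (sum_exp_pos u), softmax]

variable {ι : Type*} [Fintype ι] {u : κ → (ι → ℝ) → ℝ}

lemma ContDiff.logSumExp {n : WithTop ℕ∞} (hu : ∀ i, ContDiff ℝ n (u i)) :
    ContDiff ℝ n (fun Y => logSumExp fun i => u i Y) :=
  (ContDiff.sum fun i _ => (hu i).exp).log fun _ => (sum_exp_pos _).ne'

variable [DecidableEq ι] {u' : κ → ι → (ι → ℝ) → ℝ}

lemma HasPartials.logSumExp (hu : ∀ i, HasPartials (u i) (u' i)) :
    HasPartials (fun Y => logSumExp fun i => u i Y)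
      (fun b Y => ∑ i, softmax (fun i => u i Y) i * u' i b Y) :=
  ((HasPartials.sum fun i _ => (hu i).exp).log fun Y => (sum_exp_pos _).ne').congr
    fun b Y => by simp only [softmax, Finset.mul_sum, div_eq_inv_mul, mul_assoc]

lemma HasPartials.softmax (hu : ∀ i, HasPartials (u i) (u' i)) (i : κ) :
    HasPartials (fun Y => softmax (fun i => u i Y) i)
      (fun b Y => softmax (fun i => u i Y) i *
        (u' i b Y - ∑ j, softmax (fun i => u i Y) j * u' j b Y)) := by
  have h := ((hu i).sub (HasPartials.logSumExp hu)).exp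
  simp only [fun Y => exp_sub_logSumExp (fun i => u i Y) i] at h
  exact h

end Softmax

section ShiftStable

variable {ι : Type*}

def ShiftStable (r c : ℝ) (f : (ι → ℝ) → ℝ) : Prop :=
  (∀ Y, 0 ≤ f Y) ∧ ∀ Y y, (∀ e, |y e| ≤ r) → f (Y + y) ≤ Real.exp c * f Y

namespace ShiftStable

variable {r c d : ℝ} {f g : (ι → ℝ) → ℝ}

lemma const {a : ℝ} (ha : 0 ≤ a) : ShiftStable r 0 fun _ : ι → ℝ => a :=
  ⟨fun _ => ha, fun _ _ _ => by simp⟩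

lemma mono (hf : ShiftStable r c f) (h : c ≤ d) : ShiftStable r d f :=
  ⟨hf.1, fun Y y hy => (hf.2 Y y hy).trans
    (mul_le_mul_of_nonneg_right (Real.exp_le_exp.2 h) (hf.1 Y))⟩

lemma mul (hf : ShiftStable r c f) (hg : ShiftStable r d g) :
    ShiftStable r (c + d) fun Y => f Y * g Y :=
  ⟨fun Y => mul_nonneg (hf.1 Y) (hg.1 Y), fun Y y hy => calc
    f (Y + y) * g (Y + y) ≤ (Real.exp c * f Y) * (Real.exp d * g Y) :=
      mul_le_mul (hf.2 Y y hy) (hg.2 Y y hy) (hg.1 _) (mul_nonneg (Real.exp_pos c).le (hf.1 Y))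
    _ = Real.exp (c + d) * (f Y * g Y) := by rw [Real.exp_add]; ring⟩

lemma add (hf : ShiftStable r c f) (hg : ShiftStable r d g) :
    ShiftStable r (max c d) fun Y => f Y + g Y := by
  have hf' := hf.mono (le_max_left c d)
  have hg' := hg.mono (le_max_right c d)
  exact ⟨fun Y => add_nonneg (hf.1 Y) (hg.1 Y), fun Y y hy => by
    rw [mul_add]; exact add_le_add (hf'.2 Y y hy) (hg'.2 Y y hy)⟩

lemma sum {κ : Type*} [Fintype κ] {f : κ → (ι → ℝ) → ℝ} (hf : ∀ i, ShiftStable r c (f i)) :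
    ShiftStable r c fun Y => ∑ i, f i Y :=
  ⟨fun Y => Finset.sum_nonneg fun i _ => (hf i).1 Y, fun Y y hy => by
    rw [Finset.mul_sum]; exact Finset.sum_le_sum fun i _ => (hf i).2 Y y hy⟩

/-- Shifting back by `-y` turns the upper bound for `f` into a lower bound. -/
lemma inv (hf : ShiftStable r c f) (hpos : ∀ Y, 0 < f Y) : ShiftStable r c fun Y => (f Y)⁻¹ := by
  refine ⟨fun Y => (inv_pos.2 (hpos Y)).le, fun Y y hy => ?_⟩
  have h := hf.2 (Y + y) (-y) fun e => by simpa using hy e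
  rw [add_neg_cancel_right] at h
  beta_reduce
  rw [inv_eq_one_div, ← div_eq_mul_inv, div_le_div_iff₀ (hpos _) (hpos _)]
  linarith

lemma exp_mul_apply {β : ℝ} (hβ : 0 < β) (a : ι) :
    ShiftStable β⁻¹ 1 fun Y => Real.exp (β * Y a) := by
  refine ⟨fun Y => (Real.exp_pos _).le, fun Y y hy => ?_⟩
  have h : β * y a ≤ 1 := calc
    β * y a ≤ β * β⁻¹ := mul_le_mul_of_nonneg_left ((le_abs_self _).trans (hy a)) hβ.le
    _ = 1 := mul_inv_cancel₀ hβ.ne'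
  beta_reduce
  rw [Pi.add_apply, mul_add, Real.exp_add, mul_comm]
  exact mul_le_mul_of_nonneg_right (Real.exp_le_exp.2 h) (Real.exp_pos _).le

lemma softmax {κ : Type*} [Fintype κ] [Nonempty κ] {u : κ → (ι → ℝ) → ℝ}
    (hu : ∀ i, ShiftStable r c fun Y => Real.exp (u i Y)) (i : κ) :
    ShiftStable r (c + c) fun Y => _root_.softmax (fun i => u i Y) i :=
  (hu i).mul ((sum hu).inv fun _ => sum_exp_pos _)

end ShiftStable

end ShiftStable

section SmoothMinMaxVec

variable {N p : ℕ} (β : ℝ)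

noncomputable def rowLogSumExp (k : Fin N) (Y : Fin N × Fin p → ℝ) : ℝ :=
  logSumExp fun j => β * Y (k, j)

noncomputable def smoothMinMaxVec (Y : Fin N × Fin p → ℝ) : ℝ :=
  -(β⁻¹ * logSumExp fun k => -rowLogSumExp β k Y)

noncomputable def rowWeight (a : Fin N × Fin p) (Y : Fin N × Fin p → ℝ) : ℝ :=
  softmax (fun j => β * Y (a.1, j)) a.2

noncomputable def rowProb (k : Fin N) (Y : Fin N × Fin p → ℝ) : ℝ :=
  softmax (fun l => -rowLogSumExp β l Y) k

noncomputable def minMaxWeight (a : Fin N × Fin p) (Y : Fin N × Fin p → ℝ) : ℝ :=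
  rowProb β a.1 Y * rowWeight β a Y

noncomputable def weightScore (c b : Fin N × Fin p) (Y : Fin N × Fin p → ℝ) : ℝ :=
  kronecker c b - 2 * (kronecker c.1 b.1 * rowWeight β b Y) + minMaxWeight β b Y

noncomputable def weightScoreDeriv (c b a : Fin N × Fin p) (Y : Fin N × Fin p → ℝ) : ℝ :=
  minMaxWeight β b Y * weightScore β b a Y
    - 2 * (kronecker c.1 b.1
      * (rowWeight β b Y * (kronecker b a - kronecker b.1 a.1 * rowWeight β a Y)))

lemma smoothMinMax_eq (hβ : β ≠ 0) (W : Fin N → Fin p → ℝ) :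
    smoothMinMax β W = smoothMinMaxVec β fun a => W a.1 a.2 := by
  simp only [smoothMinMax, softMax, smoothMinMaxVec, rowLogSumExp, logSumExp, mul_neg,
    mul_inv_cancel_left₀ hβ]

lemma mComp_eq (hβ : β ≠ 0) (μb : Fin N × Fin p → ℝ) (g : ℝ → ℝ) :
    mComp β μb g = fun X => g (smoothMinMaxVec β (X + μb)) := by
  funext X
  rw [mComp, smoothMinMax_eq β hβ]
  rfl

lemma contDiff_smoothMinMaxVec [NeZero N] [NeZero p] {n : WithTop ℕ∞} :
    ContDiff ℝ n (smoothMinMaxVec (N := N) (p := p) β) :=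
  (contDiff_const.mul (ContDiff.logSumExp fun k => (ContDiff.logSumExp fun j =>
    contDiff_const.mul (contDiff_apply ℝ ℝ (k, j))).neg)).neg

end SmoothMinMaxVec

section SmoothMinMaxPartials

variable {N p : ℕ} (β : ℝ)

lemma sum_mul_kronecker_mk (f : Fin p → ℝ) (k : Fin N) (b : Fin N × Fin p) :
    ∑ j, f j * kronecker (k, j) b = kronecker k b.1 * f b.2 := by
  obtain ⟨l, i⟩ := b
  by_cases h : k = l
  · subst h
    simp [kronecker]
  · simp [kronecker, h]

lemma sum_rowProb_mul_kronecker (b : Fin N × Fin p) (Y : Fin N × Fin p → ℝ) :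
    ∑ l, rowProb β l Y * -(β * (kronecker l b.1 * rowWeight β b Y))
      = -(β * minMaxWeight β b Y) := by
  have h : ∀ l, rowProb β l Y * -(β * (kronecker l b.1 * rowWeight β b Y))
      = -(β * rowWeight β b Y) * (rowProb β l Y * kronecker l b.1) := fun l => by ring
  simp only [h, ← Finset.mul_sum, sum_mul_kronecker, minMaxWeight]
  ring

variable [NeZero p]

lemma hasPartials_rowLogSumExp (k : Fin N) :
    HasPartials (rowLogSumExp (p := p) β k) fun b Y => β * (kronecker k b.1 * rowWeight β b Y) :=
  (HasPartials.logSumExp fun j => (HasPartials.apply (k, j)).const_mul β).congr fun b Y => by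
    simp only [mul_left_comm _ β, ← Finset.mul_sum, sum_mul_kronecker_mk]
    obtain ⟨l, i⟩ := b
    by_cases h : k = l
    · subst h; rfl
    · simp [kronecker, h]

lemma hasPartials_rowWeight (a : Fin N × Fin p) :
    HasPartials (rowWeight β a) fun b Y =>
      β * (rowWeight β a Y * (kronecker a b - kronecker a.1 b.1 * rowWeight β b Y)) :=
  (HasPartials.softmax (fun j => (HasPartials.apply (a.1, j)).const_mul β) a.2).congr fun b Y => by
    simp only [mul_left_comm _ β, ← Finset.mul_sum, sum_mul_kronecker_mk]
    obtain ⟨l, i⟩ := b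
    by_cases h : a.1 = l
    · subst h; simp only [rowWeight]; ring
    · have h' : a ≠ (l, i) := by rintro rfl; exact h rfl
      simp [kronecker, h, h']

variable [NeZero N]

lemma hasPartials_smoothMinMaxVec (hβ : β ≠ 0) :
    HasPartials (smoothMinMaxVec (N := N) (p := p) β) (minMaxWeight β) :=
  ((HasPartials.logSumExp fun k => (hasPartials_rowLogSumExp β k).neg).const_mul β⁻¹).neg.congr
    fun b Y => by
      change -(β⁻¹ * ∑ l, rowProb β l Y * _) = _
      rw [sum_rowProb_mul_kronecker]
      field_simp

lemma hasPartials_rowProb (k : Fin N) :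
    HasPartials (rowProb (p := p) β k) fun b Y =>
      β * (rowProb β k Y * (minMaxWeight β b Y - kronecker k b.1 * rowWeight β b Y)) :=
  (HasPartials.softmax (fun l => (hasPartials_rowLogSumExp β l).neg) k).congr fun b Y => by
    change rowProb β k Y * (_ - ∑ l, rowProb β l Y * _) = _
    rw [sum_rowProb_mul_kronecker]
    ring

lemma hasPartials_minMaxWeight (c : Fin N × Fin p) :
    HasPartials (minMaxWeight β c) fun b Y => β * (minMaxWeight β c Y * weightScore β c b Y) :=
  ((hasPartials_rowProb β c.1).mul (hasPartials_rowWeight β c)).congr fun b Y => by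
    simp only [minMaxWeight, weightScore]
    ring

lemma hasPartials_weightScore (c b : Fin N × Fin p) :
    HasPartials (weightScore β c b) fun a Y => β * weightScoreDeriv β c b a Y :=
  (((HasPartials.const _).sub (((hasPartials_rowWeight β b).const_mul _).const_mul 2)).add
    (hasPartials_minMaxWeight β b)).congr fun a Y => by
      simp only [weightScoreDeriv]
      ring

lemma hasPartials_smoothMinMaxVec_hessian (c b : Fin N × Fin p) :
    HasPartials (fun Y => β * (minMaxWeight β c Y * weightScore β c b Y)) fun a Y =>
      β ^ 2 * (minMaxWeight β c Y * (weightScore β c a Y * weightScore β c b Y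
        + weightScoreDeriv β c b a Y)) :=
  (((hasPartials_minMaxWeight β c).mul (hasPartials_weightScore β c b)).const_mul β).congr
    fun a Y => by ring

end SmoothMinMaxPartials

section Majorants

variable {N p : ℕ} (β : ℝ)

noncomputable def weightScoreBound (c b : Fin N × Fin p) (Y : Fin N × Fin p → ℝ) : ℝ :=
  kronecker c b + 2 * (kronecker c.1 b.1 * rowWeight β b Y) + minMaxWeight β b Y

noncomputable def weightScoreDerivBound (c b a : Fin N × Fin p) (Y : Fin N × Fin p → ℝ) : ℝ :=
  minMaxWeight β b Y * weightScoreBound β b a Y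
    + 2 * (kronecker c.1 b.1
      * (rowWeight β b Y * (kronecker b a + kronecker b.1 a.1 * rowWeight β a Y)))

noncomputable def thirdDerivBound (B₁ B₂ B₃ : ℝ) (a b c : Fin N × Fin p)
    (Y : Fin N × Fin p → ℝ) : ℝ :=
  B₃ * (minMaxWeight β a Y * minMaxWeight β b Y * minMaxWeight β c Y)
    + B₂ * (β * (minMaxWeight β b Y * weightScoreBound β b a Y) * minMaxWeight β c Y
      + minMaxWeight β b Y * (β * (minMaxWeight β c Y * weightScoreBound β c a Y))
      + minMaxWeight β a Y * (β * (minMaxWeight β c Y * weightScoreBound β c b Y)))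
    + B₁ * (β ^ 2 * (minMaxWeight β c Y
      * (weightScoreBound β c a Y * weightScoreBound β c b Y + weightScoreDerivBound β c b a Y)))

variable [NeZero p]

lemma rowWeight_pos (a : Fin N × Fin p) (Y : Fin N × Fin p → ℝ) : 0 < rowWeight β a Y :=
  softmax_pos _ _

variable [NeZero N]

lemma minMaxWeight_pos (a : Fin N × Fin p) (Y : Fin N × Fin p → ℝ) : 0 < minMaxWeight β a Y :=
  mul_pos (softmax_pos _ _) (rowWeight_pos β a Y)

lemma abs_weightScore_le (c b : Fin N × Fin p) (Y : Fin N × Fin p → ℝ) :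
    |weightScore β c b Y| ≤ weightScoreBound β c b Y :=
  abs_add_le_add_of_abs_le
    (abs_sub_le_add_of_abs_le (abs_of_nonneg (kronecker_nonneg c b)).le
      (abs_mul_le_mul_of_abs_le (by norm_num) (abs_mul_le_mul_of_abs_le
        (abs_of_nonneg (kronecker_nonneg _ _)).le (abs_of_pos (rowWeight_pos β b Y)).le)))
    (abs_of_pos (minMaxWeight_pos β b Y)).le

lemma abs_weightScoreDeriv_le (c b a : Fin N × Fin p) (Y : Fin N × Fin p → ℝ) :
    |weightScoreDeriv β c b a Y| ≤ weightScoreDerivBound β c b a Y :=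
  abs_sub_le_add_of_abs_le
    (abs_mul_le_mul_of_abs_le (abs_of_pos (minMaxWeight_pos β b Y)).le
      (abs_weightScore_le β b a Y))
    (abs_mul_le_mul_of_abs_le (by norm_num) (abs_mul_le_mul_of_abs_le
      (abs_of_nonneg (kronecker_nonneg _ _)).le (abs_mul_le_mul_of_abs_le
        (abs_of_pos (rowWeight_pos β b Y)).le (abs_sub_le_add_of_abs_le
          (abs_of_nonneg (kronecker_nonneg b a)).le (abs_mul_le_mul_of_abs_le
            (abs_of_nonneg (kronecker_nonneg _ _)).le (abs_of_pos (rowWeight_pos β a Y)).le)))))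

variable {μb : Fin N × Fin p → ℝ} {g : ℝ → ℝ} {B₁ B₂ B₃ : ℝ}

theorem abs_iteratedFDeriv_mComp_le (hβ : 0 < β) (hg : ContDiff ℝ 3 g)
    (hB₁ : ∀ t, |deriv g t| ≤ B₁) (hB₂ : ∀ t, |deriv (deriv g) t| ≤ B₂)
    (hB₃ : ∀ t, |deriv (deriv (deriv g)) t| ≤ B₃) (z : Fin N × Fin p → ℝ) (a b c : Fin N × Fin p) :
    |iteratedFDeriv ℝ 3 (mComp β μb g) z ![Pi.single a 1, Pi.single b 1, Pi.single c 1]|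
      ≤ thirdDerivBound β B₁ B₂ B₃ a b c (z + μb) := by
  rw [mComp_eq β hβ.ne',
    iteratedFDeriv_comp_add_right (f := fun Y => g (smoothMinMaxVec β Y)),
    iteratedFDeriv_comp_three_single hg (contDiff_smoothMinMaxVec β)
      (hasPartials_smoothMinMaxVec β hβ.ne') (hasPartials_minMaxWeight β)
      (hasPartials_smoothMinMaxVec_hessian β)]
  set Y := z + μb
  have hP : ∀ e, |minMaxWeight β e Y| ≤ minMaxWeight β e Y :=
    fun e => (abs_of_pos (minMaxWeight_pos β e Y)).le
  have hβ' : |β| ≤ β := (abs_of_pos hβ).le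
  have hQ : ∀ c b, |β * (minMaxWeight β c Y * weightScore β c b Y)|
      ≤ β * (minMaxWeight β c Y * weightScoreBound β c b Y) := fun c b =>
    abs_mul_le_mul_of_abs_le hβ' (abs_mul_le_mul_of_abs_le (hP c) (abs_weightScore_le β c b Y))
  exact abs_add_le_add_of_abs_le (abs_add_le_add_of_abs_le
    (abs_mul_le_mul_of_abs_le (hB₃ _)
      (abs_mul_le_mul_of_abs_le (abs_mul_le_mul_of_abs_le (hP a) (hP b)) (hP c)))
    (abs_mul_le_mul_of_abs_le (hB₂ _) (abs_add_le_add_of_abs_le (abs_add_le_add_of_abs_le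
      (abs_mul_le_mul_of_abs_le (hQ b a) (hP c)) (abs_mul_le_mul_of_abs_le (hP b) (hQ c a)))
      (abs_mul_le_mul_of_abs_le (hP a) (hQ c b)))))
    (abs_mul_le_mul_of_abs_le (hB₁ _) (abs_mul_le_mul_of_abs_le (abs_of_pos (pow_pos hβ 2)).le
      (abs_mul_le_mul_of_abs_le (hP c) (abs_add_le_add_of_abs_le
        (abs_mul_le_mul_of_abs_le (abs_weightScore_le β c a Y) (abs_weightScore_le β c b Y))
        (abs_weightScoreDeriv_le β c b a Y)))))

end Majorants

section Stability

variable {N p : ℕ} [NeZero p] {β : ℝ}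

lemma shiftStable_rowWeight (hβ : 0 < β) (a : Fin N × Fin p) : ShiftStable β⁻¹ 2 (rowWeight β a) :=
  (ShiftStable.softmax (fun j => ShiftStable.exp_mul_apply hβ (a.1, j)) a.2).mono (by norm_num)

variable [NeZero N]

lemma shiftStable_rowProb (hβ : 0 < β) (k : Fin N) : ShiftStable β⁻¹ 2 (rowProb (p := p) β k) := by
  have h : ∀ l, ShiftStable β⁻¹ 1 fun Y : Fin N × Fin p → ℝ => Real.exp (-rowLogSumExp β l Y) := by
    intro l
    simp only [Real.exp_neg, rowLogSumExp, logSumExp, Real.exp_log (sum_exp_pos _)]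
    exact (ShiftStable.sum fun j => ShiftStable.exp_mul_apply hβ (l, j)).inv fun _ => sum_exp_pos _
  exact (ShiftStable.softmax h k).mono (by norm_num)

lemma shiftStable_minMaxWeight (hβ : 0 < β) (a : Fin N × Fin p) :
    ShiftStable β⁻¹ 4 (minMaxWeight β a) :=
  ((shiftStable_rowProb hβ a.1).mul (shiftStable_rowWeight hβ a)).mono (by norm_num)

lemma shiftStable_weightScoreBound (hβ : 0 < β) (c b : Fin N × Fin p) :
    ShiftStable β⁻¹ 4 (weightScoreBound β c b) :=
  (((ShiftStable.const (kronecker_nonneg c b)).add ((ShiftStable.const zero_le_two).mul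
    ((ShiftStable.const (kronecker_nonneg _ _)).mul (shiftStable_rowWeight hβ b)))).add
    (shiftStable_minMaxWeight hβ b)).mono (by norm_num)

lemma shiftStable_weightScoreDerivBound (hβ : 0 < β) (c b a : Fin N × Fin p) :
    ShiftStable β⁻¹ 8 (weightScoreDerivBound β c b a) :=
  (((shiftStable_minMaxWeight hβ b).mul (shiftStable_weightScoreBound hβ b a)).add
    ((ShiftStable.const zero_le_two).mul ((ShiftStable.const (kronecker_nonneg _ _)).mul
      ((shiftStable_rowWeight hβ b).mul ((ShiftStable.const (kronecker_nonneg b a)).add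
        ((ShiftStable.const (kronecker_nonneg _ _)).mul (shiftStable_rowWeight hβ a))))))).mono
    (by norm_num)

lemma shiftStable_thirdDerivBound (hβ : 0 < β) {B₁ B₂ B₃ : ℝ} (hB₁ : 0 ≤ B₁) (hB₂ : 0 ≤ B₂)
    (hB₃ : 0 ≤ B₃) (a b c : Fin N × Fin p) :
    ShiftStable β⁻¹ 12 (thirdDerivBound β B₁ B₂ B₃ a b c) := by
  have hP := shiftStable_minMaxWeight (N := N) (p := p) hβ
  have hℓ := shiftStable_weightScoreBound (N := N) (p := p) hβ
  have hβ' := ShiftStable.const (ι := Fin N × Fin p) (r := β⁻¹) hβ.le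
  exact ((((ShiftStable.const hB₃).mul (((hP a).mul (hP b)).mul (hP c))).add
    ((ShiftStable.const hB₂).mul (((((hβ'.mul ((hP b).mul (hℓ b a))).mul (hP c)).add
      ((hP b).mul (hβ'.mul ((hP c).mul (hℓ c a))))).add
      ((hP a).mul (hβ'.mul ((hP c).mul (hℓ c b)))))))).add
    ((ShiftStable.const hB₁).mul ((ShiftStable.const (sq_nonneg β)).mul ((hP c).mul
      (((hℓ c a).mul (hℓ c b)).add (shiftStable_weightScoreDerivBound hβ c b a)))))).mono
    (by norm_num)

variable {μb : Fin N × Fin p → ℝ} {g : ℝ → ℝ} {B₁ B₂ B₃ : ℝ}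

lemma iSup_abs_iteratedFDeriv_mComp_le (hβ : 0 < β) (hg : ContDiff ℝ 3 g)
    (hB₁ : ∀ t, |deriv g t| ≤ B₁) (hB₂ : ∀ t, |deriv (deriv g) t| ≤ B₂)
    (hB₃ : ∀ t, |deriv (deriv (deriv g)) t| ≤ B₃) (x : Fin N × Fin p → ℝ)
    (a b c : Fin N × Fin p) :
    (⨆ y : {y : Fin N × Fin p → ℝ // ∀ e, |y e| ≤ β⁻¹},
      |iteratedFDeriv ℝ 3 (mComp β μb g) (x + ↑y) ![Pi.single a 1, Pi.single b 1, Pi.single c 1]|)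
      ≤ Real.exp 12 * thirdDerivBound β B₁ B₂ B₃ a b c (x + μb) := by
  have : Nonempty {y : Fin N × Fin p → ℝ // ∀ e, |y e| ≤ β⁻¹} :=
    ⟨⟨0, fun _ => by simpa using hβ.le⟩⟩
  have hB : ∀ {h : ℝ → ℝ} {B : ℝ}, (∀ t, |h t| ≤ B) → 0 ≤ B := fun h => (abs_nonneg _).trans (h 0)
  refine ciSup_le fun y => (abs_iteratedFDeriv_mComp_le β hβ hg hB₁ hB₂ hB₃ _ a b c).trans ?_
  rw [add_right_comm]
  exact (shiftStable_thirdDerivBound hβ (hB hB₁) (hB hB₂) (hB hB₃) a b c).2 _ _ y.2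

end Stability

section Sums

variable {N p : ℕ} (β : ℝ) [NeZero p]

lemma sum_kronecker_fst_mul_rowWeight (k : Fin N) (Y : Fin N × Fin p → ℝ) :
    ∑ b, kronecker k b.1 * rowWeight β b Y = 1 := by
  rw [Fintype.sum_prod_type]
  simp only [← Finset.mul_sum]
  simp only [rowWeight, sum_softmax, mul_one, sum_kronecker]

variable [NeZero N]

lemma sum_minMaxWeight (Y : Fin N × Fin p → ℝ) : ∑ a, minMaxWeight β a Y = 1 := by
  rw [Fintype.sum_prod_type]
  simp only [minMaxWeight, ← Finset.mul_sum]
  simp only [rowWeight, sum_softmax, mul_one, rowProb]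

lemma sum_weightScoreBound (c : Fin N × Fin p) (Y : Fin N × Fin p → ℝ) :
    ∑ b, weightScoreBound β c b Y = 4 := by
  simp only [weightScoreBound, Finset.sum_add_distrib, ← Finset.mul_sum, sum_kronecker,
    sum_kronecker_fst_mul_rowWeight, sum_minMaxWeight]
  norm_num

lemma sum_weightScoreDerivBound (c b : Fin N × Fin p) (Y : Fin N × Fin p → ℝ) :
    ∑ a, weightScoreDerivBound β c b a Y
      = 4 * minMaxWeight β b Y + 4 * (kronecker c.1 b.1 * rowWeight β b Y) := by
  simp only [weightScoreDerivBound, Finset.sum_add_distrib, ← Finset.mul_sum, sum_kronecker,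
    sum_kronecker_fst_mul_rowWeight, sum_weightScoreBound]
  ring

variable (B₁ B₂ B₃ : ℝ)

lemma sum_thirdDerivBound_fst (b c : Fin N × Fin p) (Y : Fin N × Fin p → ℝ) :
    ∑ a, thirdDerivBound β B₁ B₂ B₃ a b c Y = minMaxWeight β c Y * (B₃ * minMaxWeight β b Y
      + B₂ * β * (8 * minMaxWeight β b Y + weightScoreBound β c b Y)
      + B₁ * β ^ 2 * (4 * weightScoreBound β c b Y + 4 * minMaxWeight β b Y
        + 4 * (kronecker c.1 b.1 * rowWeight β b Y))) := by
  simp only [thirdDerivBound, Finset.sum_add_distrib, ← Finset.mul_sum, ← Finset.sum_mul,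
    sum_minMaxWeight, sum_weightScoreBound, sum_weightScoreDerivBound]
  ring

lemma sum_thirdDerivBound (Y : Fin N × Fin p → ℝ) :
    ∑ a, ∑ b, ∑ c, thirdDerivBound β B₁ B₂ B₃ a b c Y
      = B₃ + 12 * β * B₂ + 24 * β ^ 2 * B₁ := by
  calc ∑ a, ∑ b, ∑ c, thirdDerivBound β B₁ B₂ B₃ a b c Y
      = ∑ a, ∑ c, ∑ b, thirdDerivBound β B₁ B₂ B₃ a b c Y :=
        Finset.sum_congr rfl fun _ _ => Finset.sum_comm
    _ = ∑ c, ∑ a, ∑ b, thirdDerivBound β B₁ B₂ B₃ a b c Y := Finset.sum_comm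
    _ = ∑ c, ∑ b, ∑ a, thirdDerivBound β B₁ B₂ B₃ a b c Y :=
        Finset.sum_congr rfl fun _ _ => Finset.sum_comm
    _ = B₃ + 12 * β * B₂ + 24 * β ^ 2 * B₁ := by
      simp only [sum_thirdDerivBound_fst, ← Finset.mul_sum, Finset.sum_add_distrib,
        sum_minMaxWeight, sum_weightScoreBound, sum_kronecker_fst_mul_rowWeight]
      rw [← Finset.sum_mul, sum_minMaxWeight]
      ring

end Sums

theorem mComp_third_derivative_local_sup_bound_general (β : ℝ) (hβ : 0 < β)
    (N p : ℕ) [NeZero N] [NeZero p]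
    (μb : Fin N × Fin p → ℝ) (g : ℝ → ℝ) (hg : ContDiff ℝ 3 g)
    (B1 B2 B3 : ℝ)
    (hB1 : ∀ t, |deriv g t| ≤ B1)
    (hB2 : ∀ t, |deriv (deriv g) t| ≤ B2)
    (hB3 : ∀ t, |deriv (deriv (deriv g)) t| ≤ B3)
    (x : Fin N × Fin p → ℝ) :
    ∑ a : Fin N × Fin p, ∑ b : Fin N × Fin p, ∑ c : Fin N × Fin p,
        (⨆ y : {y : Fin N × Fin p → ℝ // ∀ e, |y e| ≤ β⁻¹},
          |iteratedFDeriv ℝ 3 (mComp β μb g) (x + ↑y)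
            ![Pi.single a 1, Pi.single b 1, Pi.single c 1]|) ≤
      Real.exp 12 * (B3 + 16 * β * B2 + 24 * β ^ 2 * B1) := by
  have hB2₀ : 0 ≤ B2 := (abs_nonneg _).trans (hB2 0)
  calc _ ≤ ∑ a, ∑ b, ∑ c, Real.exp 12 * thirdDerivBound β B1 B2 B3 a b c (x + μb) := by
        gcongr with a _ b _ c _
        exact iSup_abs_iteratedFDeriv_mComp_le hβ hg hB1 hB2 hB3 x a b c
    _ = Real.exp 12 * (B3 + 12 * β * B2 + 24 * β ^ 2 * B1) := by
        simp only [← Finset.mul_sum, sum_thirdDerivBound]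
    _ ≤ Real.exp 12 * (B3 + 16 * β * B2 + 24 * β ^ 2 * B1) := by
        gcongr
        norm_num

/-- Bound for the sum over triples of the local sup of third partial derivatives of
`m = g ∘ G_β( · + μ̄)` over an entrywise `β⁻¹`-neighbourhood. -/
theorem mComp_third_derivative_local_sup_bound (β : ℝ) (hβ : 0 < β)
    (N p : ℕ) [NeZero N] [NeZero p] (hNp : 2 ≤ N * p)
    (μb : Fin N × Fin p → ℝ) (g : ℝ → ℝ) (hg : ContDiff ℝ 3 g)
    (B1 B2 B3 : ℝ)
    (hB1 : ∀ t, |deriv g t| ≤ B1)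
    (hB2 : ∀ t, |deriv (deriv g) t| ≤ B2)
    (hB3 : ∀ t, |deriv (deriv (deriv g)) t| ≤ B3)
    (x : Fin N × Fin p → ℝ) :
    ∑ a : Fin N × Fin p, ∑ b : Fin N × Fin p, ∑ c : Fin N × Fin p,
        (⨆ y : {y : Fin N × Fin p → ℝ // ∀ e, |y e| ≤ β⁻¹},
          |iteratedFDeriv ℝ 3 (mComp β μb g) (x + ↑y)
            ![Pi.single a 1, Pi.single b 1, Pi.single c 1]|) ≤
      Real.exp 12 * (B3 + 16 * β * B2 + 24 * β ^ 2 * B1) :=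
  mComp_third_derivative_local_sup_bound_general β hβ N p μb g hg B1 B2 B3 hB1 hB2 hB3 x
end

section
/- Let Θ be a nonempty set, p ≥ 1, κ > 0, and for each θ ∈ Θ and j ∈ [p] let v_{θj}, v*_{θj}, μ_{θj} ∈ ℝ and r_{θj} > 0, with V := sup_{θ∈Θ, j∈[p]} (|v_{θj}| ∨ |v*_{θj}|) < ∞, sup_{θ,j} r_{θj} < ∞ and sup_{θ,j} r_{θj}^{-1} < ∞. Assume: (i) inf_{θ∈Θ} max_{j∈[p]} μ_{θj} < −8V, and (ii) 7/8 ≥ (1/8)·(1 + κ^{-1}·sup_{θ,j} r_{θj})·sup_{θ,j} r_{θj}^{-1} + κ^{-1}. Then inf_{θ∈Θ} max_{j∈[p]} (v_{θj} + μ_{θj})·r_{θj} ≤ inf_{θ∈Θ} max_{j∈[p]} [ v*_{θj} + κ^{-1}·(v_{θj} + μ_{θj})·r_{θj} ]. -/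
/-! Write `T(θ)` and `R(θ)` for the maxima over `j` on the two sides, and `c = κ⁻¹`. Fix `θ₀` with
`max_j μ θ₀ j < -8V`; since `r ≥ Rinv⁻¹`, we get `T(θ₀) ≤ -7V / Rinv ≤ -V / (1 - c)`, the last step
being the tuning condition. For any `θ`, evaluating `R(θ)` at a maximiser of `T(θ)` gives
`R(θ) ≥ -V + c T(θ)`. So either `T(θ) ≤ R(θ)`, or `T(θ) > R(θ)` forces `T(θ) > -V / (1 - c)` and then
`R(θ) ≥ -V / (1 - c) ≥ T(θ₀)`. Either way `R(θ)` dominates the infimum of `T`. -/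

theorem iInf_le_iInf_of_forall_le_or_le {ι α : Type*} [CompleteLattice α] {f g : ι → α} (i₀ : ι)
    (h : ∀ i, f i₀ ≤ g i ∨ f i ≤ g i) : ⨅ i, f i ≤ ⨅ i, g i :=
  le_iInf fun i => (h i).elim (iInf_le_of_le i₀) (iInf_le_of_le i)

theorem Finset.add_mul_sup'_le_sup'_add_mul {ι α : Type*} [Ring α] [LinearOrder α]
    [IsOrderedRing α] {s : Finset ι} (H : s.Nonempty) {f g : ι → α} {b c : α}
    (hg : ∀ j ∈ s, b ≤ g j) : b + c * s.sup' H f ≤ s.sup' H fun j => g j + c * f j := by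
  obtain ⟨j, hj, hfj⟩ := s.exists_mem_eq_sup' H f
  rw [hfj]
  exact (add_le_add_left (hg j hj) _).trans (s.le_sup' (fun j => g j + c * f j) hj)

theorem mul_le_neg_div_of_inv_le {a r k d V : ℝ} (hV : 0 ≤ V) (hd : 0 < d) (hr : 0 < r)
    (hrd : r⁻¹ ≤ k * d) (ha : a ≤ -(k * V)) : a * r ≤ -V / d := by
  have hkr : d⁻¹ ≤ k * r := by
    rw [inv_le_iff_one_le_mul₀ hd, ← inv_mul_cancel₀ hr.ne']
    linarith [mul_le_mul_of_nonneg_right hrd hr.le]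
  calc a * r ≤ -(k * V) * r := by gcongr
    _ = -V * (k * r) := by ring
    _ ≤ -V * d⁻¹ := mul_le_mul_of_nonpos_left hkr (neg_nonpos.2 hV)
    _ = -V / d := (div_eq_mul_inv _ _).symm

theorem le_seven_mul_one_sub {c Rb Rinv : ℝ} (hc : 0 ≤ c) (hRb : 0 ≤ Rb) (hRinv : 0 ≤ Rinv)
    (h : 1 / 8 * (1 + c * Rb) * Rinv + c ≤ 7 / 8) : Rinv ≤ 7 * (1 - c) := by
  nlinarith [mul_nonneg (mul_nonneg hc hRb) hRinv]

theorem le_or_le_of_neg_add_mul_le {a x y c V : ℝ} (hc₀ : 0 ≤ c) (hc₁ : c < 1)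
    (ha : a ≤ -V / (1 - c)) (hy : -V + c * x ≤ y) : a ≤ y ∨ x ≤ y := by
  refine or_iff_not_imp_right.2 fun hxy => ha.trans ?_
  have h1c : 0 < 1 - c := sub_pos.2 hc₁
  have hx : -V / (1 - c) < x := by
    rw [div_lt_iff₀ h1c]
    linarith [not_le.1 hxy]
  calc -V / (1 - c) = -V + c * (-V / (1 - c)) := by field_simp; ring
    _ ≤ -V + c * x := by gcongr
    _ ≤ y := hy

theorem minMax_le_penalized_bootstrap_general {ι : Type*} (p : ℕ) [NeZero p]
    (κ : ℝ) (hκ : 0 < κ)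
    (v vstar μ r : ι → Fin p → ℝ) (hr : ∀ θ j, 0 < r θ j)
    (V Rb Rinv : ℝ)
    (hVv : ∀ θ j, |v θ j| ≤ V) (hVvs : ∀ θ j, |vstar θ j| ≤ V)
    (hRb : ∀ θ j, r θ j ≤ Rb) (hRinv : ∀ θ j, (r θ j)⁻¹ ≤ Rinv)
    (h1 : ∃ θ, (Finset.univ.sup' Finset.univ_nonempty fun j => μ θ j) < -8 * V)
    (h2 : (1 / 8 : ℝ) * (1 + κ⁻¹ * Rb) * Rinv + κ⁻¹ ≤ 7 / 8) :
    (⨅ θ : ι, (((Finset.univ.sup' Finset.univ_nonempty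
        fun j => (v θ j + μ θ j) * r θ j) : ℝ) : EReal)) ≤
      ⨅ θ : ι, (((Finset.univ.sup' Finset.univ_nonempty
        fun j => vstar θ j + κ⁻¹ * ((v θ j + μ θ j) * r θ j)) : ℝ) : EReal) := by
  obtain ⟨θ₀, hθ₀⟩ := h1
  obtain ⟨j₀⟩ : Nonempty (Fin p) := inferInstance
  have hV : 0 ≤ V := (abs_nonneg _).trans (hVv θ₀ j₀)
  have hc : 0 ≤ κ⁻¹ := inv_nonneg.2 hκ.le
  have hRinv₀ : 0 < Rinv := (inv_pos.2 (hr θ₀ j₀)).trans_le (hRinv θ₀ j₀)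
  have hRinv₇ : Rinv ≤ 7 * (1 - κ⁻¹) :=
    le_seven_mul_one_sub hc ((hr θ₀ j₀).le.trans (hRb θ₀ j₀)) hRinv₀.le h2
  have hTθ₀ : (Finset.univ.sup' Finset.univ_nonempty fun j => (v θ₀ j + μ θ₀ j) * r θ₀ j) ≤
      -V / (1 - κ⁻¹) := by
    refine Finset.sup'_le _ _ fun j _ => mul_le_neg_div_of_inv_le hV (by linarith) (hr θ₀ j)
      ((hRinv θ₀ j).trans hRinv₇) ?_
    linarith [Finset.le_sup' (fun j => μ θ₀ j) (Finset.mem_univ j), le_of_abs_le (hVv θ₀ j)]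
  refine iInf_le_iInf_of_forall_le_or_le θ₀ fun θ => ?_
  simp only [EReal.coe_le_coe_iff]
  exact le_or_le_of_neg_add_mul_le hc (by linarith) hTθ₀
    (Finset.add_mul_sup'_le_sup'_add_mul _ fun j _ => neg_le_of_abs_le (hVvs θ j))

/-- Deterministic comparison of the MinMax statistic with the penalized-resampling
bootstrap statistic when all the population moments are very negative
(`T_n(η) ≤ R_n^{PR*}` on the relevant event).  Here `θ` ranges over the (abstract) null
parameter set `ι`, `v θ j` is the standardized empirical process, `vstar θ j` the
bootstrap process, `μ θ j` the standardized population moment, `r θ j` the ratio of the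
population to the sample standard deviation, and `κ` the penalization parameter. -/
theorem minMax_le_penalized_bootstrap {ι : Type*} [Nonempty ι] (p : ℕ) [NeZero p]
    (κ : ℝ) (hκ : 0 < κ)
    (v vstar μ r : ι → Fin p → ℝ) (hr : ∀ θ j, 0 < r θ j)
    (V Rb Rinv : ℝ)
    (hVv : ∀ θ j, |v θ j| ≤ V) (hVvs : ∀ θ j, |vstar θ j| ≤ V)
    (hRb : ∀ θ j, r θ j ≤ Rb) (hRinv : ∀ θ j, (r θ j)⁻¹ ≤ Rinv)
    (h1 : ∃ θ, (Finset.univ.sup' Finset.univ_nonempty fun j => μ θ j) < -8 * V)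
    (h2 : (1 / 8 : ℝ) * (1 + κ⁻¹ * Rb) * Rinv + κ⁻¹ ≤ 7 / 8) :
    (⨅ θ : ι, (((Finset.univ.sup' Finset.univ_nonempty
        fun j => (v θ j + μ θ j) * r θ j) : ℝ) : EReal)) ≤
      ⨅ θ : ι, (((Finset.univ.sup' Finset.univ_nonempty
        fun j => vstar θ j + κ⁻¹ * ((v θ j + μ θ j) * r θ j)) : ℝ) : EReal) :=
  minMax_le_penalized_bootstrap_general p κ hκ v vstar μ r hr V Rb Rinv hVv hVvs hRb hRinv h1 h2
end

section
/- Let Θ be a nonempty set, p ≥ 1, and for each θ ∈ Θ, j ∈ [p] let μ_{θj}, v_{θj} ∈ ℝ and r_{θj} > 0. Suppose Θ_I := {θ ∈ Θ : μ_{θj} ≤ 0 for all j ∈ [p]} is nonempty, sup_{θ,j} |v_{θj}| ≤ w̄ < ∞, and |r_{θj} − 1| ≤ t and |r_{θj}^{-1} − 1| ≤ t for all θ, j, where 0 ≤ t < 1. Set b_{θj} := (v_{θj} + μ_{θj})·r_{θj}. Then for every ε ≥ 0, every θ̂ ∈ Θ with max_{j∈[p]} b_{θ̂j} ≤ inf_{θ∈Θ}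 max_{j∈[p]} b_{θj} + ε satisfies max_{j∈[p]} μ_{θ̂j} ≤ (2(1+t)·w̄ + ε)/(1 − t). -/
/-!
At a point `θ₀` of the identified set every `b θ₀ j = (v θ₀ j + μ θ₀ j) r θ₀ j` is at most
`(1 + t) w̄`, so an ε-minimizer `θ̂` has `b θ̂ j ≤ (1 + t) w̄ + ε` for all `j`. Solving for the
moment, `μ θ̂ j = b θ̂ j / r θ̂ j - v θ̂ j ≤ ((1 + t) w̄ + ε) / (1 - t) + w̄`, since `r ≥ 1 - t > 0`.
-/

theorem add_mul_le_mul_of_le_of_nonpos {v μ r s w : ℝ} (hv : v ≤ w) (hμ : μ ≤ 0)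
    (hr : 0 ≤ r) (hrs : r ≤ s) (hw : 0 ≤ w) : (v + μ) * r ≤ s * w :=
  calc (v + μ) * r ≤ w * r := mul_le_mul_of_nonneg_right (by linarith) hr
    _ ≤ w * s := mul_le_mul_of_nonneg_left hrs hw
    _ = s * w := mul_comm w s

theorem le_div_add_of_add_mul_le {v μ r w B c : ℝ} (hv : -w ≤ v) (hb : (v + μ) * r ≤ B)
    (hB : 0 ≤ B) (hc : 0 < c) (hcr : c ≤ r) : μ ≤ B / c + w :=
  have hr : 0 < r := hc.trans_le hcr
  calc μ = (v + μ) * r / r - v := by field_simp; ring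
    _ ≤ B / r - v := sub_le_sub_right (div_le_div_of_nonneg_right hb hr.le) v
    _ ≤ B / c + w := by linarith [div_le_div_of_nonneg_left hB hc hcr]

theorem div_add_le_add_mul_div {a c d w : ℝ} (hc : 0 < c) (hcd : c ≤ d) (hw : 0 ≤ w) :
    a / c + w ≤ (a + d * w) / c := by
  rw [add_div]
  refine add_le_add_right ((le_div_iff₀ hc).2 ?_) _
  nlinarith

/- The ε-minimizer condition `max_j b θ̂ j ≤ inf_θ max_j b θ j + ε` is stated pointwise in `θ`,
which avoids the junk value of `sInf` on a set that is not bounded below. -/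
theorem eMinimizer_nearly_feasible_general {ι : Type*} (p : ℕ) [NeZero p]
    (μ v r : ι → Fin p → ℝ)
    (hI : ∃ θ, ∀ j, μ θ j ≤ 0)
    (w t : ℝ) (ht0 : 0 ≤ t) (ht1 : t < 1)
    (hv : ∀ θ j, |v θ j| ≤ w)
    (hr1 : ∀ θ j, |r θ j - 1| ≤ t)
    (ε : ℝ) (hε : 0 ≤ ε) (θhat : ι)
    (hmin : ∀ θ, (Finset.univ.sup' Finset.univ_nonempty
          fun j => (v θhat j + μ θhat j) * r θhat j) ≤
        (Finset.univ.sup' Finset.univ_nonempty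
          fun j => (v θ j + μ θ j) * r θ j) + ε) :
    (Finset.univ.sup' Finset.univ_nonempty fun j => μ θhat j) ≤
      (2 * (1 + t) * w + ε) / (1 - t) := by
  obtain ⟨θ₀, hθ₀⟩ := hI
  have hw : 0 ≤ w := (abs_nonneg _).trans (hv θ₀ 0)
  have hr_lower θ j : 1 - t ≤ r θ j := by linarith [(abs_le.1 (hr1 θ j)).1]
  have hr_upper θ j : r θ j ≤ 1 + t := by linarith [(abs_le.1 (hr1 θ j)).2]
  have hbhat : (Finset.univ.sup' Finset.univ_nonempty
      fun j => (v θhat j + μ θhat j) * r θhat j) ≤ (1 + t) * w + ε := by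
    refine (hmin θ₀).trans (add_le_add_left (Finset.sup'_le _ _ fun j _ => ?_) ε)
    exact add_mul_le_mul_of_le_of_nonpos (abs_le.1 (hv θ₀ j)).2 (hθ₀ j)
      (by linarith [hr_lower θ₀ j]) (hr_upper θ₀ j) hw
  refine Finset.sup'_le _ _ fun j _ => ?_
  calc μ θhat j ≤ ((1 + t) * w + ε) / (1 - t) + w :=
        le_div_add_of_add_mul_le (abs_le.1 (hv θhat j)).1
          ((Finset.le_sup' _ (Finset.mem_univ j)).trans hbhat) (by positivity)
          (by linarith) (hr_lower θhat j)
    _ ≤ ((1 + t) * w + ε + (1 + t) * w) / (1 - t) :=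
        div_add_le_add_mul_div (by linarith) (by linarith) hw
    _ = (2 * (1 + t) * w + ε) / (1 - t) := by ring

/-- Every ε-minimizer of the MinMax statistic has nearly nonpositive standardized
population moments.  Here `μ θ j` is the standardized population moment, `r θ j` the
ratio of the population to the sample standard deviation, `v θ j` the standardized
empirical process, so `(v θ j + μ θ j) * r θ j = √n m̄_{θ,j}/σ̂_{θ,j}`;  the ε-minimizer
property `max_j b_{θ̂ j} ≤ inf_θ max_j b_{θ j} + ε` is expressed by its equivalent
pointwise form. -/
theorem eMinimizer_nearly_feasible {ι : Type*} [Nonempty ι] (p : ℕ) [NeZero p]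
    (μ v r : ι → Fin p → ℝ) (hr : ∀ θ j, 0 < r θ j)
    (hI : ∃ θ, ∀ j, μ θ j ≤ 0)
    (w t : ℝ) (ht0 : 0 ≤ t) (ht1 : t < 1)
    (hv : ∀ θ j, |v θ j| ≤ w)
    (hr1 : ∀ θ j, |r θ j - 1| ≤ t)
    (hr2 : ∀ θ j, |(r θ j)⁻¹ - 1| ≤ t)
    (ε : ℝ) (hε : 0 ≤ ε) (θhat : ι)
    (hmin : ∀ θ, (Finset.univ.sup' Finset.univ_nonempty
          fun j => (v θhat j + μ θhat j) * r θhat j) ≤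
        (Finset.univ.sup' Finset.univ_nonempty
          fun j => (v θ j + μ θ j) * r θ j) + ε) :
    (Finset.univ.sup' Finset.univ_nonempty fun j => μ θhat j) ≤
      (2 * (1 + t) * w + ε) / (1 - t) :=
  eMinimizer_nearly_feasible_general p μ v r hI w t ht0 ht1 hv hr1 ε hε θhat hmin
end

section
/- Let Θ be a nonempty set, p ≥ 1, and for each θ ∈ Θ, j ∈ [p] let μ_{θj}, v_{θj} ∈ ℝ and r_{θj} > 0. Suppose Θ_I := {θ ∈ Θ : μ_{θj} ≤ 0 for all j ∈ [p]} is nonempty, sup_{θ,j} |v_{θj}| ≤ w̄ < ∞, |r_{θj} − 1| ≤ t and |r_{θj}^{-1} − 1| ≤ t for all θ, j with 0 ≤ t < 1, and ℓ_min := inf_{θ∈Θ} max_{j∈[p]} μ_{θj} ≥ −2w̄/(1−t). For θ ∈ Θ define Ψ_θ := { j ∈ [p] : μ_{θj} ≥ max_{j̃∈[p]} μ_{θj̃} − (2w̄/(1−t))·((1+t)/(1−t)) }. Then for every θ ∈ Θ_I: max_{j∈[p]} ( v_{θj} + μ_{θj}·r_{θj} ) = max_{j∈Ψ_θ} ( v_{θj}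 + μ_{θj}·r_{θj} ). -/
/-!
Let `j₁` maximise `μ θ₀ ·` and `j⋆` maximise `v θ₀ · + μ θ₀ · * r θ₀ ·`. Since all `μ θ₀ j ≤ 0`
and `r ∈ [1 - t, 1 + t]`, comparing the objective at `j⋆` and `j₁` gives
`μ j₁ (1 + t) - 2w̄ ≤ μ j⋆ (1 - t)`. Dividing by `1 - t` loses `2t μ j₁ / (1 - t)`, which the lower
bound `μ j₁ ≥ -2w̄/(1-t)` controls, so `μ j⋆` is within `(2w̄/(1-t))((1+t)/(1-t))` of `μ j₁`.
-/

lemma mul_one_add_le_mul_of_nonpos {μ r t : ℝ} (hμ : μ ≤ 0) (hr : |r - 1| ≤ t) :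
    μ * (1 + t) ≤ μ * r :=
  mul_le_mul_of_nonpos_left (by linarith [(abs_le.mp hr).2]) hμ

lemma mul_le_mul_one_sub_of_nonpos {μ r t : ℝ} (hμ : μ ≤ 0) (hr : |r - 1| ≤ t) :
    μ * r ≤ μ * (1 - t) :=
  mul_le_mul_of_nonpos_left (by linarith [(abs_le.mp hr).1]) hμ

lemma mul_one_add_sub_le_mul_one_sub_of_add_mul_le {v₁ v₂ μ₁ μ₂ r₁ r₂ w t : ℝ}
    (hv₁ : |v₁| ≤ w) (hv₂ : |v₂| ≤ w) (hμ₁ : μ₁ ≤ 0) (hμ₂ : μ₂ ≤ 0)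
    (hr₁ : |r₁ - 1| ≤ t) (hr₂ : |r₂ - 1| ≤ t) (h : v₁ + μ₁ * r₁ ≤ v₂ + μ₂ * r₂) :
    μ₁ * (1 + t) - 2 * w ≤ μ₂ * (1 - t) := by
  have := mul_one_add_le_mul_of_nonpos hμ₁ hr₁
  have := mul_le_mul_one_sub_of_nonpos hμ₂ hr₂
  linarith [(abs_le.mp hv₁).1, (abs_le.mp hv₂).2]

lemma sub_le_of_mul_one_add_sub_le_mul_one_sub {a b w t : ℝ} (ht0 : 0 ≤ t) (ht1 : t < 1)
    (ha : -(2 * w / (1 - t)) ≤ a) (h : a * (1 + t) - 2 * w ≤ b * (1 - t)) :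
    a - 2 * w / (1 - t) * ((1 + t) / (1 - t)) ≤ b := by
  have hs : 0 < 1 - t := by linarith
  have ha' : 0 ≤ a * (1 - t) + 2 * w := by
    have := (le_div_iff₀ hs).mp (neg_le.mp ha)
    linarith
  have key : (a - b) * (1 - t) ^ 2 ≤ 2 * w * (1 + t) := by
    nlinarith [mul_le_mul_of_nonneg_right h hs.le, mul_nonneg ht0 ha']
  rw [div_mul_div_comm, ← sq]
  linarith [(le_div_iff₀ (pow_pos hs 2)).mpr key]

theorem max_attained_on_nearly_binding_general {ι : Type*} (p : ℕ) [NeZero p]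
    (μ v r : ι → Fin p → ℝ)
    (w t : ℝ) (ht0 : 0 ≤ t) (ht1 : t < 1)
    (hv : ∀ θ j, |v θ j| ≤ w)
    (hr1 : ∀ θ j, |r θ j - 1| ≤ t)
    (hlmin : ∀ θ : ι, -(2 * w / (1 - t)) ≤
      Finset.univ.sup' Finset.univ_nonempty fun j => μ θ j)
    (θ₀ : ι) (hθ₀ : ∀ j, μ θ₀ j ≤ 0) :
    ∃ j : Fin p,
      ((Finset.univ.sup' Finset.univ_nonempty fun j' => μ θ₀ j') -
          (2 * w / (1 - t)) * ((1 + t) / (1 - t)) ≤ μ θ₀ j) ∧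
      v θ₀ j + μ θ₀ j * r θ₀ j =
        Finset.univ.sup' Finset.univ_nonempty
          fun j' => v θ₀ j' + μ θ₀ j' * r θ₀ j' := by
  obtain ⟨jStar, -, hjStar⟩ := Finset.exists_mem_eq_sup' Finset.univ_nonempty
    fun j => v θ₀ j + μ θ₀ j * r θ₀ j
  obtain ⟨j₁, -, hj₁⟩ := Finset.exists_mem_eq_sup' Finset.univ_nonempty fun j => μ θ₀ j
  refine ⟨jStar, ?_, hjStar.symm⟩
  have hmax : v θ₀ j₁ + μ θ₀ j₁ * r θ₀ j₁ ≤ v θ₀ jStar + μ θ₀ jStar * r θ₀ jStar :=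
    hjStar ▸ Finset.le_sup' (fun j => v θ₀ j + μ θ₀ j * r θ₀ j) (Finset.mem_univ j₁)
  rw [hj₁]
  exact sub_le_of_mul_one_add_sub_le_mul_one_sub ht0 ht1 (hj₁ ▸ hlmin θ₀)
    (mul_one_add_sub_le_mul_one_sub_of_add_mul_le (hv θ₀ j₁) (hv θ₀ jStar) (hθ₀ j₁)
      (hθ₀ jStar) (hr1 θ₀ j₁) (hr1 θ₀ jStar) hmax)

/-- For every identified parameter value `θ₀` (one with all standardized population
moments `μ θ₀ j ≤ 0`), the maximum of `v θ₀ j + μ θ₀ j * r θ₀ j` over all `j ∈ [p]` is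
attained on the set `Ψ_{θ₀}` of nearly binding inequalities, i.e. it coincides with the
maximum over `Ψ_{θ₀} = {j : μ θ₀ j ≥ max_{j'} μ θ₀ j' - (2w̄/(1-t))((1+t)/(1-t))}`.
The hypothesis `ℓ_min ≥ -2w̄/(1-t)` is expressed by its equivalent pointwise form. -/
theorem max_attained_on_nearly_binding {ι : Type*} [Nonempty ι] (p : ℕ) [NeZero p]
    (μ v r : ι → Fin p → ℝ) (hr : ∀ θ j, 0 < r θ j)
    (hI : ∃ θ, ∀ j, μ θ j ≤ 0)
    (w t : ℝ) (ht0 : 0 ≤ t) (ht1 : t < 1)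
    (hv : ∀ θ j, |v θ j| ≤ w)
    (hr1 : ∀ θ j, |r θ j - 1| ≤ t)
    (hr2 : ∀ θ j, |(r θ j)⁻¹ - 1| ≤ t)
    (hlmin : ∀ θ : ι, -(2 * w / (1 - t)) ≤
      Finset.univ.sup' Finset.univ_nonempty fun j => μ θ j)
    (θ₀ : ι) (hθ₀ : ∀ j, μ θ₀ j ≤ 0) :
    ∃ j : Fin p,
      ((Finset.univ.sup' Finset.univ_nonempty fun j' => μ θ₀ j') -
          (2 * w / (1 - t)) * ((1 + t) / (1 - t)) ≤ μ θ₀ j) ∧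
      v θ₀ j + μ θ₀ j * r θ₀ j =
        Finset.univ.sup' Finset.univ_nonempty
          fun j' => v θ₀ j' + μ θ₀ j' * r θ₀ j' :=
  max_attained_on_nearly_binding_general p μ v r w t ht0 ht1 hv hr1 hlmin θ₀ hθ₀
end
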